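/- arXiv:1611.02126 — 2 statements merged into one kernel-verified Lean document; each statement's English description precedes it below -/
import Mathlib

section
/- Let A1, A2, A3, A4, B1, B2, B3, B4 be pairwise disjoint sets of variables and e a binary variable not contained in any of them, and let P be a strictly positive binary probability distribution over their union together with {e}. Suppose the three statements hold for P: I(A1∪A2∪A3∪A4, B1∪B2∪B3∪B4 | ∅); I(A1∪A2∪B3∪B4, B1∪B2∪A3∪A4 | e = e'); and I(A1∪A3∪B2∪B4, B1∪B3∪A2∪A4 | e = e''), where e' and e'' are the two distinct values of e. Then for every fixed instances a2, a3, a4, b1, b2, b3, b4 of A2, A3, A4, B1, B2, B3, B4 the following six implications hold: (i) I(A1, e | A2=a2, A3=a3, A4=a4, B1=b1, B2=b2, B3=b3, B4=b4) implies I(A1, e | A2=a2, A3=a3, A4=a4, B3=b3, B4=b4, and every value of B1 and B2); (ii) symmetrically with the roles of A1, A2 exchanged with B1, B2: I(B1, e | given the fixed instance) implies I(B1, e | A3=a3, A4=a4, B2=b2, B3=b3, B4=b4, and every value of A1 and A2); (iii) I(A1, e | given the fixed instance) implies I(A1, e | A2=a2, A3=a3, A4=a4, B2=b2, B4=b4,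 and every value of B1 and B3); (iv) I(B1, e | given the fixed instance) implies I(B1, e | A2=a2, A4=a4, B2=b2, B3=b3, B4=b4, and every value of A1 and A3); (v) I(A1, e | given the fixed instance) implies I(A1, e | A2=a2, A3=a3, B2=b2, B3=b3, B4=b4, and every value of A4 and B1); (vi) I(B1, e | given the fixed instance) implies I(B1, e | A2=a2, A3=a3, A4=a4, B2=b2, B3=b3, and every value of A1 and B4). -/
set_option linter.unusedSectionVars false
set_option linter.unusedVariables false
set_option maxHeartbeats 20000000

variable {ι : Type*} [Fintype ι] [DecidableEq ι]

/-- The marginal probability, under the distribution `P` on joint value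
assignments of binary variables, of the event that the variables in `S` take
the values given by the assignment `s`. -/
def margin (P : (ι → Bool) → ℝ) (S : Finset ι) (s : ι → Bool) : ℝ :=
  ∑ ω : ι → Bool, if ∀ i ∈ S, ω i = s i then P ω else 0

/-- `I(X, Y | Z)` holds for `P` : conditional independence of `X` and `Y`
given `Z`, stated in the product form `P(X,Y,Z)·P(Z) = P(X,Z)·P(Y,Z)` for all
value assignments, which is equivalent to
`P(X,Y | Z=z) = P(X | Z=z)·P(Y | Z=z)` whenever `P(Z=z) > 0`. -/
def CondIndep (P : (ι → Bool) → ℝ) (X Y Z : Finset ι) : Prop :=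
  ∀ s : ι → Bool,
    margin P (X ∪ Y ∪ Z) s * margin P Z s = margin P (X ∪ Z) s * margin P (Y ∪ Z) s

/-- `I(X, Y | W = w, F)` holds for `P` : conditional independence of `X` and
`Y` given that the variables of `W` are fixed to their values under the
assignment `w` while the variables of `F` range over all their values. -/
def CondIndepPartial (P : (ι → Bool) → ℝ) (X Y : Finset ι)
    (W : Finset ι) (w : ι → Bool) (F : Finset ι) : Prop :=
  ∀ s : ι → Bool, (∀ i ∈ W, s i = w i) →
    margin P (X ∪ Y ∪ (W ∪ F)) s * margin P (W ∪ F) s =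
      margin P (X ∪ (W ∪ F)) s * margin P (Y ∪ (W ∪ F)) s

/-- `I(X, Y | e = b)` holds for `P` : conditional independence of `X` and `Y`
given that the binary variable `e` takes the specific value `b`. -/
def CondIndepGivenVal (P : (ι → Bool) → ℝ) (X Y : Finset ι) (e : ι) (b : Bool) : Prop :=
  ∀ s : ι → Bool, s e = b →
    margin P (X ∪ Y ∪ {e}) s * margin P {e} s =
      margin P (X ∪ {e}) s * margin P (Y ∪ {e}) s

namespace SixImpl

/-! ### margin lemmas -/

theorem margin_congr {P : (ι → Bool) → ℝ} {S : Finset ι} {s t : ι → Bool}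
    (h : ∀ i ∈ S, s i = t i) : margin P S s = margin P S t := by
  unfold margin
  refine Finset.sum_congr rfl fun ω _ => ?_
  refine if_congr ?_ rfl rfl
  constructor
  · exact fun h' i hi => (h' i hi).trans (h i hi)
  · exact fun h' i hi => (h' i hi).trans (h i hi).symm

theorem margin_pos {P : (ι → Bool) → ℝ} (hpos : ∀ ω, 0 < P ω) (S : Finset ι) (s : ι → Bool) :
    0 < margin P S s := by
  unfold margin
  refine Finset.sum_pos' (fun ω _ => ?_) ⟨s, Finset.mem_univ s, ?_⟩
  · split
    · exact (hpos ω).le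
    · exact le_refl 0
  · simpa using hpos s

theorem margin_univ {P : (ι → Bool) → ℝ} (s : ι → Bool) :
    margin P Finset.univ s = P s := by
  unfold margin
  rw [Finset.sum_eq_single s]
  · simp
  · intro ω _ hne
    rw [if_neg]
    intro h
    exact hne (funext fun i => h i (Finset.mem_univ i))
  · intro h; exact absurd (Finset.mem_univ s) h

theorem margin_empty {P : (ι → Bool) → ℝ} (s : ι → Bool) :
    margin P ∅ s = ∑ ω : ι → Bool, P ω := by
  simp [margin]

theorem cond_insert {e : ι} {S : Finset ι} (he : e ∉ S) (s ω : ι → Bool) (c : Bool) :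
    (∀ i ∈ insert e S, ω i = Function.update s e c i) ↔
      ((∀ i ∈ S, ω i = s i) ∧ ω e = c) := by
  constructor
  · intro h
    refine ⟨fun i hi => ?_, ?_⟩
    · have := h i (Finset.mem_insert_of_mem hi)
      rwa [Function.update_of_ne (ne_of_mem_of_not_mem hi he)] at this
    · simpa using h e (Finset.mem_insert_self e S)
  · rintro ⟨h1, h2⟩ i hi
    rcases Finset.mem_insert.mp hi with rfl | hi
    · simpa using h2
    · rw [Function.update_of_ne (ne_of_mem_of_not_mem hi he)]
      exact h1 i hi

theorem margin_split {P : (ι → Bool) → ℝ} {e : ι} {S : Finset ι} (he : e ∉ S) (s : ι → Bool) :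
    margin P S s = margin P (insert e S) (Function.update s e true)
      + margin P (insert e S) (Function.update s e false) := by
  unfold margin
  rw [← Finset.sum_add_distrib]
  refine Finset.sum_congr rfl fun ω _ => ?_
  rw [if_congr (cond_insert he s ω true) rfl rfl, if_congr (cond_insert he s ω false) rfl rfl]
  by_cases h1 : ∀ i ∈ S, ω i = s i
  · cases hb : ω e <;> simp [h1, hb]
  · simp [h1]

/-! ### patching and cross identities -/

def patch (S : Finset ι) (s t : ι → Bool) : ι → Bool := fun i => if i ∈ S then s i else t i

theorem patch_eq {S : Finset ι} {a b c : ι → Bool} (h1 : ∀ i ∈ S, a i = c i)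
    (h2 : ∀ i ∉ S, b i = c i) : patch S a b = c := funext fun i => by
  by_cases h : i ∈ S
  · simpa [patch, h] using h1 i h
  · simpa [patch, h] using h2 i h

def CrossOn (f : (ι → Bool) → ℝ) (S : Finset ι) : Prop :=
  ∀ ω ω', f ω * f ω' = f (patch S ω ω') * f (patch S ω' ω)

theorem patch_compl (S : Finset ι) (a b : ι → Bool) : patch Sᶜ a b = patch S b a := by
  funext i
  by_cases h : i ∈ S <;> simp [patch, h]

theorem CrossOn.compl {f : (ι → Bool) → ℝ} {S : Finset ι} (h : CrossOn f S) :
    CrossOn f Sᶜ := by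
  intro ω ω'
  rw [patch_compl, patch_compl, mul_comm (f (patch S ω' ω))]
  exact h ω ω'

theorem crossOn_of_CIGV {P : (ι → Bool) → ℝ} (hpos : ∀ ω, 0 < P ω) {e : ι} {b : Bool}
    {X Y : Finset ι} (hXY : Disjoint X Y) (heX : e ∉ X) (heY : e ∉ Y)
    (hU : X ∪ Y ∪ {e} = Finset.univ) (H : CondIndepGivenVal P X Y e b) :
    CrossOn (fun ω => P (Function.update ω e b)) X := by
  intro ω ω'
  show P (Function.update ω e b) * P (Function.update ω' e b) =
    P (Function.update (patch X ω ω') e b) * P (Function.update (patch X ω' ω) e b)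
  have happ : ∀ σ : ι → Bool,
      P (Function.update σ e b) * margin P {e} (Function.update ω e b) =
        margin P (X ∪ {e}) (Function.update σ e b) *
          margin P (Y ∪ {e}) (Function.update σ e b) := by
    intro σ
    have h := H (Function.update σ e b) (Function.update_self e b σ)
    rw [hU, margin_univ] at h
    have hm : margin P {e} (Function.update σ e b) =
        margin P {e} (Function.update ω e b) := by
      refine margin_congr ?_
      intro i hi
      rw [Finset.mem_singleton] at hi
      subst hi
      simp
    rwa [hm] at h
  have hXc : ∀ σ τ : ι → Bool, (∀ i ∈ X, σ i = τ i) →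
      margin P (X ∪ {e}) (Function.update σ e b) =
        margin P (X ∪ {e}) (Function.update τ e b) := by
    intro σ τ h
    refine margin_congr ?_
    intro i hi
    rcases Finset.mem_union.mp hi with hi | hi
    · have hne : i ≠ e := ne_of_mem_of_not_mem hi heX
      rw [Function.update_of_ne hne, Function.update_of_ne hne]
      exact h i hi
    · rw [Finset.mem_singleton] at hi
      subst hi
      simp
  have hYc : ∀ σ τ : ι → Bool, (∀ i ∈ Y, σ i = τ i) →
      margin P (Y ∪ {e}) (Function.update σ e b) =
        margin P (Y ∪ {e}) (Function.update τ e b) := by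
    intro σ τ h
    refine margin_congr ?_
    intro i hi
    rcases Finset.mem_union.mp hi with hi | hi
    · have hne : i ≠ e := ne_of_mem_of_not_mem hi heY
      rw [Function.update_of_ne hne, Function.update_of_ne hne]
      exact h i hi
    · rw [Finset.mem_singleton] at hi
      subst hi
      simp
  have h1 := happ ω
  have h2 := happ ω'
  have h3 := happ (patch X ω ω')
  have h4 := happ (patch X ω' ω)
  rw [hXc (patch X ω ω') ω (fun i hi => by simp [patch, hi]),
    hYc (patch X ω ω') ω' (fun i hi => by
      simp [patch, Finset.disjoint_right.mp hXY hi])] at h3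
  rw [hXc (patch X ω' ω) ω' (fun i hi => by simp [patch, hi]),
    hYc (patch X ω' ω) ω (fun i hi => by
      simp [patch, Finset.disjoint_right.mp hXY hi])] at h4
  have hm0 : (0:ℝ) < margin P {e} (Function.update ω e b) := margin_pos hpos _ _
  apply mul_right_cancel₀ (mul_pos hm0 hm0).ne'
  calc (P (Function.update ω e b) * P (Function.update ω' e b)) *
        (margin P {e} (Function.update ω e b) * margin P {e} (Function.update ω e b))
      = (P (Function.update ω e b) * margin P {e} (Function.update ω e b)) *
        (P (Function.update ω' e b) * margin P {e} (Function.update ω e b)) := by ring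
    _ = (margin P (X ∪ {e}) (Function.update ω e b) *
          margin P (Y ∪ {e}) (Function.update ω e b)) *
        (margin P (X ∪ {e}) (Function.update ω' e b) *
          margin P (Y ∪ {e}) (Function.update ω' e b)) := by rw [h1, h2]
    _ = (margin P (X ∪ {e}) (Function.update ω e b) *
          margin P (Y ∪ {e}) (Function.update ω' e b)) *
        (margin P (X ∪ {e}) (Function.update ω' e b) *
          margin P (Y ∪ {e}) (Function.update ω e b)) := by ring
    _ = (P (Function.update (patch X ω ω') e b) * margin P {e} (Function.update ω e b)) *
        (P (Function.update (patch X ω' ω) e b) * margin P {e} (Function.update ω e b)) := by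
        rw [h3, h4]
    _ = (P (Function.update (patch X ω ω') e b) * P (Function.update (patch X ω' ω) e b)) *
        (margin P {e} (Function.update ω e b) * margin P {e} (Function.update ω e b)) := by ring

theorem crossOn_Q {P : (ι → Bool) → ℝ} (hsum : ∑ ω : ι → Bool, P ω = 1) {e : ι}
    {A B : Finset ι} (hAB : Disjoint A B) (heA : e ∉ A) (heB : e ∉ B)
    (hU : A ∪ B ∪ {e} = Finset.univ) (H : CondIndep P A B ∅) :
    CrossOn (fun ω => P (Function.update ω e true) + P (Function.update ω e false)) A := by
  have heAB : e ∉ A ∪ B := by simp [Finset.mem_union, heA, heB]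
  have hins : insert e (A ∪ B) = Finset.univ := by
    rw [← hU]
    ext i
    simp only [Finset.mem_insert, Finset.mem_union, Finset.mem_singleton]
    tauto
  have hQ : ∀ s : ι → Bool,
      P (Function.update s e true) + P (Function.update s e false) =
        margin P A s * margin P B s := by
    intro s
    have h := H s
    rw [Finset.union_empty, Finset.union_empty, Finset.union_empty, margin_empty, hsum,
      mul_one, margin_split heAB s, hins, margin_univ, margin_univ] at h
    exact h
  intro ω ω'
  show (P (Function.update ω e true) + P (Function.update ω e false)) *
      (P (Function.update ω' e true) + P (Function.update ω' e false)) =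
    (P (Function.update (patch A ω ω') e true) + P (Function.update (patch A ω ω') e false)) *
      (P (Function.update (patch A ω' ω) e true) + P (Function.update (patch A ω' ω) e false))
  rw [hQ, hQ, hQ, hQ]
  rw [margin_congr (show ∀ i ∈ A, patch A ω ω' i = ω i from fun i hi => by simp [patch, hi]),
    margin_congr (show ∀ i ∈ B, patch A ω ω' i = ω' i from fun i hi => by
      simp [patch, Finset.disjoint_right.mp hAB hi]),
    margin_congr (show ∀ i ∈ A, patch A ω' ω i = ω' i from fun i hi => by simp [patch, hi]),
    margin_congr (show ∀ i ∈ B, patch A ω' ω i = ω i from fun i hi => by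
      simp [patch, Finset.disjoint_right.mp hAB hi])]
  ring

theorem main_transfer (u w : (ι → Bool) → ℝ) (hu : ∀ ω, 0 < u ω) (hw : ∀ ω, 0 < w ω)
    (X W S T D1 D2 : Finset ι) (v : ι → Bool)
    (cu : CrossOn u X) (cw : CrossOn w W) (cq : CrossOn (fun ω => u ω + w ω) S)
    (hTX : T ⊆ X) (hTW : T ⊆ W) (hTS : T ⊆ S)
    (hD1X : Disjoint D1 X) (hD1W : Disjoint D1 W)
    (hD2X : Disjoint D2 X) (hD2S : Disjoint D2 S)
    (Hyp : ∀ ω ω', (∀ i ∉ T, ω i = v i) → (∀ i ∉ T, ω' i = v i) →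
      u ω * w ω' = u ω' * w ω) :
    ∀ ω ω', (∀ i ∉ T ∪ D1 ∪ D2, ω i = v i) → (∀ i ∉ T, ω' i = ω i) →
      u ω * w ω' = u ω' * w ω := by
  intro ω ω' hω hωω'
  -- dictionaries
  have hD1T : ∀ i ∈ D1, i ∉ T := fun i hi hT => Finset.disjoint_left.mp hD1X hi (hTX hT)
  have hD2T : ∀ i ∈ D2, i ∉ T := fun i hi hT => Finset.disjoint_left.mp hD2X hi (hTX hT)
  have hω' : ∀ i, i ∉ T ∪ D1 ∪ D2 → ω' i = v i := by
    intro i hi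
    have hiT : i ∉ T := fun h => hi (by simp [Finset.mem_union, h])
    rw [hωω' i hiT]
    exact hω i hi
  set ωb : ι → Bool := patch (D1 ∪ D2) v ω with hωbdef
  set ωb' : ι → Bool := patch (D1 ∪ D2) v ω' with hωbdef'
  set μ : ι → Bool := patch D1 v ω with hμdef
  set μ' : ι → Bool := patch D1 v ω' with hμdef'
  -- coordinate facts
  have hc1 : ∀ i, i ∉ T → ωb i = v i := by
    intro i hiT
    by_cases h : i ∈ D1 ∪ D2
    · simp [hωbdef, patch, h]
    · simp only [hωbdef, patch, if_neg h]
      exact hω i (by simp only [Finset.mem_union] at h ⊢; tauto)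
  have hc1' : ∀ i, i ∉ T → ωb' i = v i := by
    intro i hiT
    by_cases h : i ∈ D1 ∪ D2
    · simp [hωbdef', patch, h]
    · simp only [hωbdef', patch, if_neg h]
      exact hω' i (by simp only [Finset.mem_union] at h ⊢; tauto)
  -- μ agrees with ωb off D2, μ' with ωb' off D2 ; μ agrees with ω off D1 etc.
  have hμωb : ∀ i, i ∉ D2 → μ i = ωb i := by
    intro i hi
    by_cases h : i ∈ D1 <;>
      simp [hμdef, hωbdef, patch, h, Finset.mem_union, hi]
  have hμωb' : ∀ i, i ∉ D2 → μ' i = ωb' i := by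
    intro i hi
    by_cases h : i ∈ D1 <;>
      simp [hμdef', hωbdef', patch, h, Finset.mem_union, hi]
  have hμω : ∀ i, i ∉ D1 → μ i = ω i := by
    intro i hi; simp [hμdef, patch, hi]
  have hμω' : ∀ i, i ∉ D1 → μ' i = ω' i := by
    intro i hi; simp [hμdef', patch, hi]
  have hμμ' : ∀ i, i ∉ T → μ' i = μ i := by
    intro i hi
    by_cases h : i ∈ D1
    · simp [hμdef, hμdef', patch, h]
    · simp [hμdef, hμdef', patch, h, hωω' i hi]
  have hωbωb' : ∀ i, i ∉ T → ωb' i = ωb i := by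
    intro i hi
    by_cases h : i ∈ D1 ∪ D2
    · simp [hωbdef, hωbdef', patch, h]
    · simp [hωbdef, hωbdef', patch, h, hωω' i hi]
  -- patch equalities, reusable
  have sub1 : ∀ (Y : Finset ι), T ⊆ Y → Disjoint D2 Y →
      patch Y μ ωb' = ωb ∧ patch Y ωb' μ = μ' := by
    intro Y hTY hD2Y
    constructor
    · refine patch_eq (fun i hi => hμωb i (Finset.disjoint_right.mp hD2Y hi)) ?_
      intro i hi
      exact hωbωb' i (fun h => hi (hTY h))
    · refine patch_eq (fun i hi => ?_) (fun i hi => (hμμ' i (fun h => hi (hTY h))).symm)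
      rw [hμωb' i (Finset.disjoint_right.mp hD2Y hi)]
  have sub2 : ∀ (Y : Finset ι), T ⊆ Y → Disjoint D1 Y →
      patch Y ω μ' = μ ∧ patch Y μ' ω = ω' := by
    intro Y hTY hD1Y
    constructor
    · refine patch_eq (fun i hi => ?_) (fun i hi => hμμ' i (fun h => hi (hTY h)))
      rw [← hμω i (Finset.disjoint_right.mp hD1Y hi)]
    · refine patch_eq (fun i hi => ?_) (fun i hi => (hωω' i (fun h => hi (hTY h))).symm)
      rw [hμω' i (Finset.disjoint_right.mp hD1Y hi)]
  obtain ⟨E1, E2⟩ := sub1 S hTS hD2S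
  obtain ⟨E3, E4⟩ := sub1 X hTX hD2X
  obtain ⟨E5, E6⟩ := sub2 X hTX hD1X
  obtain ⟨E7, E8⟩ := sub2 W hTW hD1W
  -- algebra
  have a : u ωb * w ωb' = u ωb' * w ωb := Hyp ωb ωb' hc1 hc1'
  have hb : u ωb * (u ωb' + w ωb') = u ωb' * (u ωb + w ωb) := by linear_combination a
  have c : (u μ + w μ) * (u ωb' + w ωb') = (u ωb + w ωb) * (u μ' + w μ') := by
    have h := cq μ ωb'
    simp only [E1, E2] at h
    exact h
  have d : u μ * u ωb' = u ωb * u μ' := by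
    have h := cu μ ωb'
    rwa [E3, E4] at h
  have c' : (u μ' + w μ') * (u ωb + w ωb) = (u μ + w μ) * (u ωb' + w ωb') := by
    linear_combination -c
  have e : u μ * (u μ' + w μ') = u μ' * (u μ + w μ) := by
    have hposfac : (0:ℝ) < u ωb' * (u ωb + w ωb) :=
      mul_pos (hu _) (add_pos (hu _) (hw _))
    apply mul_right_cancel₀ hposfac.ne'
    calc (u μ * (u μ' + w μ')) * (u ωb' * (u ωb + w ωb))
        = (u μ * u ωb') * ((u μ' + w μ') * (u ωb + w ωb)) := by ring
      _ = (u ωb * u μ') * ((u μ' + w μ') * (u ωb + w ωb)) := by rw [d]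
      _ = (u ωb * u μ') * ((u μ + w μ) * (u ωb' + w ωb')) := by rw [c']
      _ = (u μ' * (u μ + w μ)) * (u ωb * (u ωb' + w ωb')) := by ring
      _ = (u μ' * (u μ + w μ)) * (u ωb' * (u ωb + w ωb)) := by rw [hb]
  have f : u μ * w μ' = u μ' * w μ := by linear_combination e
  have gu : u ω * u μ' = u μ * u ω' := by
    have h := cu ω μ'
    rwa [E5, E6] at h
  have gw : w ω * w μ' = w μ * w ω' := by
    have h := cw ω μ'
    rwa [E7, E8] at h
  have gw' : w ω' * w μ = w ω * w μ' := by linear_combination -gw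
  have hposfac : (0:ℝ) < u μ' * w μ := mul_pos (hu _) (hw _)
  apply mul_right_cancel₀ hposfac.ne'
  calc (u ω * w ω') * (u μ' * w μ)
      = (u ω * u μ') * (w ω' * w μ) := by ring
    _ = (u μ * u ω') * (w ω' * w μ) := by rw [gu]
    _ = (u μ * u ω') * (w ω * w μ') := by rw [gw']
    _ = (u ω' * w ω) * (u μ * w μ') := by ring
    _ = (u ω' * w ω) * (u μ' * w μ) := by rw [f]

theorem cha_fwd {P : (ι → Bool) → ℝ} (hpos : ∀ ω, 0 < P ω) {e : ι} {T Z : Finset ι}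
    (heT : e ∉ T) (heZ : e ∉ Z) (hTZ : Disjoint T Z)
    (hU : T ∪ {e} ∪ Z = Finset.univ) {v : ι → Bool}
    (H : ∀ s, (∀ i ∈ Z, s i = v i) →
      margin P (T ∪ {e} ∪ Z) s * margin P Z s =
        margin P (T ∪ Z) s * margin P ({e} ∪ Z) s) :
    ∀ (b₀ : Bool) (ω ω' : ι → Bool), (∀ i, i ∉ T → i ≠ e → ω i = v i) →
      (∀ i, i ∉ T → i ≠ e → ω' i = v i) →
      P (Function.update ω e b₀) * P (Function.update ω' e (!b₀)) =
        P (Function.update ω' e b₀) * P (Function.update ω e (!b₀)) := by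
  have heTZ : e ∉ T ∪ Z := by simp [Finset.mem_union, heT, heZ]
  have hins : insert e (T ∪ Z) = Finset.univ := by
    rw [← hU]
    ext i
    simp only [Finset.mem_insert, Finset.mem_union, Finset.mem_singleton]
    tauto
  have key : ∀ σ : ι → Bool, (∀ i, i ∉ T → i ≠ e → σ i = v i) → ∀ ε : Bool,
      P (Function.update σ e ε) * margin P Z v =
        (P (Function.update σ e true) + P (Function.update σ e false)) *
          margin P ({e} ∪ Z) (Function.update v e ε) := by
    intro σ hσ ε
    have hsZ : ∀ i ∈ Z, Function.update σ e ε i = v i := by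
      intro i hi
      have hne : i ≠ e := ne_of_mem_of_not_mem hi heZ
      rw [Function.update_of_ne hne]
      exact hσ i (Finset.disjoint_right.mp hTZ hi) hne
    have h := H _ hsZ
    rw [hU, margin_univ, margin_congr hsZ, margin_split heTZ, hins, margin_univ, margin_univ,
      Function.update_idem, Function.update_idem,
      margin_congr (show ∀ i ∈ ({e} ∪ Z : Finset ι), Function.update σ e ε i =
        Function.update v e ε i by
          intro i hi
          rcases Finset.mem_union.mp hi with hi | hi
          · rw [Finset.mem_singleton] at hi
            subst hi
            simp
          · have hne : i ≠ e := ne_of_mem_of_not_mem hi heZ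
            rw [Function.update_of_ne hne, Function.update_of_ne hne]
            exact hσ i (Finset.disjoint_right.mp hTZ hi) hne)] at h
    exact h
  intro b₀ ω ω' hω hω'
  have e1 := key ω hω b₀
  have e2 := key ω' hω' (!b₀)
  have e3 := key ω' hω' b₀
  have e4 := key ω hω (!b₀)
  have hK : (0:ℝ) < margin P Z v := margin_pos hpos Z v
  apply mul_right_cancel₀ (mul_pos hK hK).ne'
  calc (P (Function.update ω e b₀) * P (Function.update ω' e (!b₀))) * (margin P Z v * margin P Z v)
      = (P (Function.update ω e b₀) * margin P Z v) *
        (P (Function.update ω' e (!b₀)) * margin P Z v) := by ring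
    _ = ((P (Function.update ω e true) + P (Function.update ω e false)) *
          margin P ({e} ∪ Z) (Function.update v e b₀)) *
        ((P (Function.update ω' e true) + P (Function.update ω' e false)) *
          margin P ({e} ∪ Z) (Function.update v e (!b₀))) := by rw [e1, e2]
    _ = ((P (Function.update ω' e true) + P (Function.update ω' e false)) *
          margin P ({e} ∪ Z) (Function.update v e b₀)) *
        ((P (Function.update ω e true) + P (Function.update ω e false)) *
          margin P ({e} ∪ Z) (Function.update v e (!b₀))) := by ring
    _ = (P (Function.update ω' e b₀) * margin P Z v) *
        (P (Function.update ω e (!b₀)) * margin P Z v) := by rw [e3, e4]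
    _ = (P (Function.update ω' e b₀) * P (Function.update ω e (!b₀))) *
        (margin P Z v * margin P Z v) := by ring


theorem cha_bwd {P : (ι → Bool) → ℝ} (hpos : ∀ ω, 0 < P ω) {e : ι} {T Z : Finset ι}
    (heT : e ∉ T) (heZ : e ∉ Z)
    (hU : T ∪ {e} ∪ Z = Finset.univ) (s : ι → Bool)
    (H : ∀ ω ω' : ι → Bool, (∀ i, i ∉ T → i ≠ e → ω i = s i) →
      (∀ i, i ∉ T → i ≠ e → ω' i = s i) →
      P (Function.update ω e true) * P (Function.update ω' e false) =
        P (Function.update ω' e true) * P (Function.update ω e false)) :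
    margin P (T ∪ {e} ∪ Z) s * margin P Z s =
      margin P (T ∪ Z) s * margin P ({e} ∪ Z) s := by
  have heTZ : e ∉ T ∪ Z := by simp [Finset.mem_union, heT, heZ]
  have htot : ∀ i, i ∉ T → i ≠ e → i ∈ Z := by
    intro i h1 h2
    have h := Finset.mem_univ i
    rw [← hU] at h
    simp only [Finset.mem_union, Finset.mem_singleton] at h
    tauto
  have hins : insert e (T ∪ Z) = Finset.univ := by
    rw [← hU]
    ext i
    simp only [Finset.mem_insert, Finset.mem_union, Finset.mem_singleton]
    tauto
  have hsing : ({e} ∪ Z : Finset ι) = insert e Z := (Finset.insert_eq e Z).symm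
  rw [hU, margin_univ, margin_split heTZ s, hins, margin_univ, margin_univ,
    margin_split heZ s, hsing]
  set Ct := margin P (insert e Z) (Function.update s e true) with hCt
  set Cf := margin P (insert e Z) (Function.update s e false) with hCf
  -- the key cross identity
  have key : P (Function.update s e true) * Cf = P (Function.update s e false) * Ct := by
    have hcross : ∀ ω : ι → Bool, (∀ i ∈ Z, ω i = s i) →
        P (Function.update s e true) * P (Function.update ω e false) =
          P (Function.update ω e true) * P (Function.update s e false) :=
      fun ω hω => H s ω (fun _ _ _ => rfl) (fun i hiT hie => hω i (htot i hiT hie))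
    have reindex : (∑ ω : ι → Bool, if ((∀ i ∈ Z, ω i = s i) ∧ ω e = false)
          then P (Function.update ω e true) else 0)
        = ∑ ω : ι → Bool, if ((∀ i ∈ Z, ω i = s i) ∧ ω e = true)
          then P (Function.update ω e true) else 0 := by
      have hinv : Function.Involutive (fun ω : ι → Bool => Function.update ω e (!(ω e))) := by
        intro ω
        funext i
        by_cases h : i = e
        · subst h; simp
        · simp [Function.update_of_ne h]
      have hsum := Equiv.sum_comp (hinv.toPerm _)
        (fun ω : ι → Bool => if ((∀ i ∈ Z, ω i = s i) ∧ ω e = true)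
          then P (Function.update ω e true) else 0)
      rw [← hsum]
      refine Finset.sum_congr rfl fun ω _ => ?_
      have h1 : (hinv.toPerm _) ω = Function.update ω e (!(ω e)) := rfl
      rw [h1]
      have hZag : ∀ c : Bool, (∀ i ∈ Z, Function.update ω e c i = s i) = (∀ i ∈ Z, ω i = s i) := by
        intro c
        refine propext ?_
        constructor <;> intro h i hi <;> have hne : i ≠ e := ne_of_mem_of_not_mem hi heZ
        · have := h i hi
          rwa [Function.update_of_ne hne] at this
        · rw [Function.update_of_ne hne]
          exact h i hi
      by_cases hz : ∀ i ∈ Z, ω i = s i <;> cases hb : ω e <;>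
        simp [hZag, hz, hb, Function.update_idem]
    -- expand Ct / Cf
    have hCfsum : Cf = ∑ ω : ι → Bool, if ((∀ i ∈ Z, ω i = s i) ∧ ω e = false)
        then P ω else 0 := by
      rw [hCf]
      unfold margin
      exact Finset.sum_congr rfl fun ω _ => if_congr (cond_insert heZ s ω false) rfl rfl
    have hCtsum : Ct = ∑ ω : ι → Bool, if ((∀ i ∈ Z, ω i = s i) ∧ ω e = true)
        then P ω else 0 := by
      rw [hCt]
      unfold margin
      exact Finset.sum_congr rfl fun ω _ => if_congr (cond_insert heZ s ω true) rfl rfl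
    calc P (Function.update s e true) * Cf
        = ∑ ω : ι → Bool, if ((∀ i ∈ Z, ω i = s i) ∧ ω e = false)
            then P (Function.update s e false) * P (Function.update ω e true) else 0 := by
          rw [hCfsum, Finset.mul_sum]
          refine Finset.sum_congr rfl fun ω _ => ?_
          rw [mul_ite, mul_zero]
          by_cases hc : (∀ i ∈ Z, ω i = s i) ∧ ω e = false
          · rw [if_pos hc, if_pos hc]
            obtain ⟨hz, hbω⟩ := hc
            have hωf : Function.update ω e false = ω := by
              rw [← hbω]
              exact Function.update_eq_self e ω
            calc P (Function.update s e true) * P ω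
                = P (Function.update s e true) * P (Function.update ω e false) := by rw [hωf]
              _ = P (Function.update ω e true) * P (Function.update s e false) := hcross ω hz
              _ = P (Function.update s e false) * P (Function.update ω e true) := mul_comm _ _
          · rw [if_neg hc, if_neg hc]
      _ = P (Function.update s e false) * ∑ ω : ι → Bool,
            (if ((∀ i ∈ Z, ω i = s i) ∧ ω e = false) then P (Function.update ω e true) else 0) := by
          rw [Finset.mul_sum]
          refine Finset.sum_congr rfl fun ω _ => ?_
          rw [mul_ite, mul_zero]
      _ = P (Function.update s e false) * ∑ ω : ι → Bool,
            (if ((∀ i ∈ Z, ω i = s i) ∧ ω e = true) then P (Function.update ω e true) else 0) := by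
          rw [reindex]
      _ = P (Function.update s e false) * Ct := by
          rw [hCtsum]
          congr 1
          refine Finset.sum_congr rfl fun ω _ => ?_
          by_cases hc : (∀ i ∈ Z, ω i = s i) ∧ ω e = true
          · rw [if_pos hc, if_pos hc]
            obtain ⟨hz, hbω⟩ := hc
            have hωt : Function.update ω e true = ω := by
              rw [← hbω]
              exact Function.update_eq_self e ω
            rw [hωt]
          · rw [if_neg hc, if_neg hc]
  -- conclude by cases on s e
  have hCs : margin P (insert e Z) s =
      margin P (insert e Z) (Function.update s e (s e)) := by
    rw [Function.update_eq_self]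
  cases hse : s e
  · have hs1 : P s = P (Function.update s e false) := by
      rw [show Function.update s e false = s by rw [← hse]; exact Function.update_eq_self e s]
    have hs2 : margin P (insert e Z) s = Cf := by
      rw [hCs, hse]
    rw [hs1, hs2]
    linear_combination -key
  · have hs1 : P s = P (Function.update s e true) := by
      rw [show Function.update s e true = s by rw [← hse]; exact Function.update_eq_self e s]
    have hs2 : margin P (insert e Z) s = Ct := by
      rw [hCs, hse]
    rw [hs1, hs2]
    linear_combination key


theorem hypconv {P : (ι → Bool) → ℝ} (hpos : ∀ ω, 0 < P ω) {e : ι} (b : Bool)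
    {T Wall : Finset ι} {v : ι → Bool}
    (heT : e ∉ T) (heW : e ∉ Wall) (hTW : Disjoint T Wall)
    (hU : T ∪ {e} ∪ Wall = Finset.univ)
    (H : CondIndepPartial P T {e} Wall v ∅) :
    ∀ ω ω' : ι → Bool, (∀ i ∉ T, ω i = v i) → (∀ i ∉ T, ω' i = v i) →
      P (Function.update ω e b) * P (Function.update ω' e (!b)) =
        P (Function.update ω' e b) * P (Function.update ω e (!b)) := by
  have H' : ∀ s, (∀ i ∈ Wall, s i = v i) →
      margin P (T ∪ {e} ∪ Wall) s * margin P Wall s =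
        margin P (T ∪ Wall) s * margin P ({e} ∪ Wall) s := by
    intro s hsw
    have h := H s hsw
    simpa only [Finset.union_empty] using h
  intro ω ω' hω hω'
  exact cha_fwd hpos heT heW hTW hU H' b ω ω' (fun i hi _ => hω i hi) (fun i hi _ => hω' i hi)

theorem cclconv {P : (ι → Bool) → ℝ} (hpos : ∀ ω, 0 < P ω) {e : ι} (b : Bool)
    {T D W' : Finset ι} {v : ι → Bool}
    (heT : e ∉ T) (heW : e ∉ W') (heD : e ∉ D)
    (hU : T ∪ {e} ∪ (W' ∪ D) = Finset.univ)
    (H : ∀ ω ω' : ι → Bool, (∀ i, i ∉ T ∪ D → ω i = v i) → (∀ i ∉ T, ω' i = ω i) →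
      P (Function.update ω e b) * P (Function.update ω' e (!b)) =
        P (Function.update ω' e b) * P (Function.update ω e (!b))) :
    CondIndepPartial P T {e} W' v D := by
  intro s hs
  have heZ : e ∉ W' ∪ D := by simp [Finset.mem_union, heW, heD]
  have htot : ∀ i, i ∉ T → i ≠ e → i ∈ W' ∪ D := by
    intro i h1 h2
    have h := Finset.mem_univ i
    rw [← hU] at h
    simp only [Finset.mem_union, Finset.mem_singleton] at h ⊢
    tauto
  refine cha_bwd hpos heT heZ hU s ?_
  intro ω ω' hω hω'
  have hc1 : ∀ i, i ∉ T ∪ D → Function.update ω e (v e) i = v i := by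
    intro i hi
    simp only [Finset.mem_union, not_or] at hi
    obtain ⟨hiT, hiD⟩ := hi
    by_cases hie : i = e
    · subst hie; simp
    · rw [Function.update_of_ne hie, hω i hiT hie]
      rcases Finset.mem_union.mp (htot i hiT hie) with hiW | hiD'
      · exact hs i hiW
      · exact absurd hiD' hiD
  have hc2 : ∀ i, i ∉ T → Function.update ω' e (v e) i = Function.update ω e (v e) i := by
    intro i hiT
    by_cases hie : i = e
    · subst hie; simp
    · rw [Function.update_of_ne hie, Function.update_of_ne hie, hω i hiT hie, hω' i hiT hie]
  have hb := H (Function.update ω e (v e)) (Function.update ω' e (v e)) hc1 hc2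
  simp only [Function.update_idem] at hb
  cases b
  · simp only [Bool.not_false] at hb
    linear_combination -hb
  · simp only [Bool.not_true] at hb
    exact hb

theorem disj_compl_of_subset {s t : Finset ι} (h : s ⊆ t) : Disjoint s tᶜ :=
  Finset.disjoint_left.mpr fun i hi hic => (Finset.mem_compl.mp hic) (h hi)

theorem subset_compl_of_disj {s t : Finset ι} (h : Disjoint s t) : s ⊆ tᶜ :=
  fun i hi => Finset.mem_compl.mpr fun hit => Finset.disjoint_left.mp h hi hit

end SixImpl

open SixImpl in
/-- Lemma 12 of the paper: given the three independencies `I1`, `I2`, `I3`,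
for every fixed instance `v` of the variables the six implications
(\ref{lem12a})–(\ref{lem123b}) hold. -/
theorem six_implications
    (A1 A2 A3 A4 B1 B2 B3 B4 : Finset ι) (e : ι)
    (hdisj : List.Pairwise Disjoint [A1, A2, A3, A4, B1, B2, B3, B4, ({e} : Finset ι)])
    (hUniv : A1 ∪ A2 ∪ A3 ∪ A4 ∪ B1 ∪ B2 ∪ B3 ∪ B4 ∪ {e} = Finset.univ)
    (P : (ι → Bool) → ℝ) (hpos : ∀ ω, 0 < P ω) (hsum : ∑ ω, P ω = 1)
    (b : Bool)
    (I1 : CondIndep P (A1 ∪ A2 ∪ A3 ∪ A4) (B1 ∪ B2 ∪ B3 ∪ B4) ∅)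
    (I2 : CondIndepGivenVal P (A1 ∪ A2 ∪ B3 ∪ B4) (B1 ∪ B2 ∪ A3 ∪ A4) e b)
    (I3 : CondIndepGivenVal P (A1 ∪ A3 ∪ B2 ∪ B4) (B1 ∪ B3 ∪ A2 ∪ A4) e (!b))
    (v : ι → Bool) :
    (CondIndepPartial P A1 {e} (A2 ∪ A3 ∪ A4 ∪ B1 ∪ B2 ∪ B3 ∪ B4) v ∅ →
        CondIndepPartial P A1 {e} (A2 ∪ A3 ∪ A4 ∪ B3 ∪ B4) v (B1 ∪ B2)) ∧
    (CondIndepPartial P B1 {e} (A1 ∪ A2 ∪ A3 ∪ A4 ∪ B2 ∪ B3 ∪ B4) v ∅ →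
        CondIndepPartial P B1 {e} (A3 ∪ A4 ∪ B2 ∪ B3 ∪ B4) v (A1 ∪ A2)) ∧
    (CondIndepPartial P A1 {e} (A2 ∪ A3 ∪ A4 ∪ B1 ∪ B2 ∪ B3 ∪ B4) v ∅ →
        CondIndepPartial P A1 {e} (A2 ∪ A3 ∪ A4 ∪ B2 ∪ B4) v (B1 ∪ B3)) ∧
    (CondIndepPartial P B1 {e} (A1 ∪ A2 ∪ A3 ∪ A4 ∪ B2 ∪ B3 ∪ B4) v ∅ →
        CondIndepPartial P B1 {e} (A2 ∪ A4 ∪ B2 ∪ B3 ∪ B4) v (A1 ∪ A3)) ∧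
    (CondIndepPartial P A1 {e} (A2 ∪ A3 ∪ A4 ∪ B1 ∪ B2 ∪ B3 ∪ B4) v ∅ →
        CondIndepPartial P A1 {e} (A2 ∪ A3 ∪ B2 ∪ B3 ∪ B4) v (A4 ∪ B1)) ∧
    (CondIndepPartial P B1 {e} (A1 ∪ A2 ∪ A3 ∪ A4 ∪ B2 ∪ B3 ∪ B4) v ∅ →
        CondIndepPartial P B1 {e} (A2 ∪ A3 ∪ A4 ∪ B2 ∪ B3) v (A1 ∪ B4)) := by
  -- extract pairwise disjointness facts
  obtain ⟨h1, hdisj⟩ := List.pairwise_cons.mp hdisj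
  obtain ⟨h2, hdisj⟩ := List.pairwise_cons.mp hdisj
  obtain ⟨h3, hdisj⟩ := List.pairwise_cons.mp hdisj
  obtain ⟨h4, hdisj⟩ := List.pairwise_cons.mp hdisj
  obtain ⟨h5, hdisj⟩ := List.pairwise_cons.mp hdisj
  obtain ⟨h6, hdisj⟩ := List.pairwise_cons.mp hdisj
  obtain ⟨h7, hdisj⟩ := List.pairwise_cons.mp hdisj
  obtain ⟨h8, hdisj⟩ := List.pairwise_cons.mp hdisj
  have d12 := h1 A2 (by simp); have d13 := h1 A3 (by simp); have d14 := h1 A4 (by simp)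
  have d15 := h1 B1 (by simp); have d16 := h1 B2 (by simp); have d17 := h1 B3 (by simp)
  have d18 := h1 B4 (by simp); have d1e := h1 {e} (by simp)
  have d23 := h2 A3 (by simp); have d24 := h2 A4 (by simp); have d25 := h2 B1 (by simp)
  have d26 := h2 B2 (by simp); have d27 := h2 B3 (by simp); have d28 := h2 B4 (by simp)
  have d2e := h2 {e} (by simp)
  have d34 := h3 A4 (by simp); have d35 := h3 B1 (by simp); have d36 := h3 B2 (by simp)
  have d37 := h3 B3 (by simp); have d38 := h3 B4 (by simp); have d3e := h3 {e} (by simp)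
  have d45 := h4 B1 (by simp); have d46 := h4 B2 (by simp); have d47 := h4 B3 (by simp)
  have d48 := h4 B4 (by simp); have d4e := h4 {e} (by simp)
  have d56 := h5 B2 (by simp); have d57 := h5 B3 (by simp); have d58 := h5 B4 (by simp)
  have d5e := h5 {e} (by simp)
  have d67 := h6 B3 (by simp); have d68 := h6 B4 (by simp); have d6e := h6 {e} (by simp)
  have d78 := h7 B4 (by simp); have d7e := h7 {e} (by simp)
  have d8e := h8 {e} (by simp)
  have he1 : e ∉ A1 := Finset.disjoint_singleton_right.mp d1e
  have he2 : e ∉ A2 := Finset.disjoint_singleton_right.mp d2e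
  have he3 : e ∉ A3 := Finset.disjoint_singleton_right.mp d3e
  have he4 : e ∉ A4 := Finset.disjoint_singleton_right.mp d4e
  have he5 : e ∉ B1 := Finset.disjoint_singleton_right.mp d5e
  have he6 : e ∉ B2 := Finset.disjoint_singleton_right.mp d6e
  have he7 : e ∉ B3 := Finset.disjoint_singleton_right.mp d7e
  have he8 : e ∉ B4 := Finset.disjoint_singleton_right.mp d8e
  have htot : ∀ i : ι, i ∈ A1 ∨ i ∈ A2 ∨ i ∈ A3 ∨ i ∈ A4 ∨ i ∈ B1 ∨ i ∈ B2 ∨ i ∈ B3 ∨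
      i ∈ B4 ∨ i = e := by
    intro i
    have h := Finset.mem_univ i
    rw [← hUniv] at h
    simp only [Finset.mem_union, Finset.mem_singleton] at h
    tauto
  -- universal-cover facts
  have hU2 : (A1 ∪ A2 ∪ B3 ∪ B4) ∪ (B1 ∪ B2 ∪ A3 ∪ A4) ∪ {e} = Finset.univ := by
    ext i
    simp only [Finset.mem_union, Finset.mem_singleton, Finset.mem_univ, iff_true]
    rcases htot i with h|h|h|h|h|h|h|h|h <;> tauto
  have hU3 : (A1 ∪ A3 ∪ B2 ∪ B4) ∪ (B1 ∪ B3 ∪ A2 ∪ A4) ∪ {e} = Finset.univ := by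
    ext i
    simp only [Finset.mem_union, Finset.mem_singleton, Finset.mem_univ, iff_true]
    rcases htot i with h|h|h|h|h|h|h|h|h <;> tauto
  have hUq : (A1 ∪ A2 ∪ A3 ∪ A4) ∪ (B1 ∪ B2 ∪ B3 ∪ B4) ∪ {e} = Finset.univ := by
    ext i
    simp only [Finset.mem_union, Finset.mem_singleton, Finset.mem_univ, iff_true]
    rcases htot i with h|h|h|h|h|h|h|h|h <;> tauto
  have hUA : A1 ∪ {e} ∪ (A2 ∪ A3 ∪ A4 ∪ B1 ∪ B2 ∪ B3 ∪ B4) = Finset.univ := by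
    ext i
    simp only [Finset.mem_union, Finset.mem_singleton, Finset.mem_univ, iff_true]
    rcases htot i with h|h|h|h|h|h|h|h|h <;> tauto
  have hUB : B1 ∪ {e} ∪ (A1 ∪ A2 ∪ A3 ∪ A4 ∪ B2 ∪ B3 ∪ B4) = Finset.univ := by
    ext i
    simp only [Finset.mem_union, Finset.mem_singleton, Finset.mem_univ, iff_true]
    rcases htot i with h|h|h|h|h|h|h|h|h <;> tauto
  have hUc1 : A1 ∪ {e} ∪ ((A2 ∪ A3 ∪ A4 ∪ B3 ∪ B4) ∪ (B1 ∪ B2)) = Finset.univ := by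
    ext i
    simp only [Finset.mem_union, Finset.mem_singleton, Finset.mem_univ, iff_true]
    rcases htot i with h|h|h|h|h|h|h|h|h <;> tauto
  have hUc2 : B1 ∪ {e} ∪ ((A3 ∪ A4 ∪ B2 ∪ B3 ∪ B4) ∪ (A1 ∪ A2)) = Finset.univ := by
    ext i
    simp only [Finset.mem_union, Finset.mem_singleton, Finset.mem_univ, iff_true]
    rcases htot i with h|h|h|h|h|h|h|h|h <;> tauto
  have hUc3 : A1 ∪ {e} ∪ ((A2 ∪ A3 ∪ A4 ∪ B2 ∪ B4) ∪ (B1 ∪ B3)) = Finset.univ := by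
    ext i
    simp only [Finset.mem_union, Finset.mem_singleton, Finset.mem_univ, iff_true]
    rcases htot i with h|h|h|h|h|h|h|h|h <;> tauto
  have hUc4 : B1 ∪ {e} ∪ ((A2 ∪ A4 ∪ B2 ∪ B3 ∪ B4) ∪ (A1 ∪ A3)) = Finset.univ := by
    ext i
    simp only [Finset.mem_union, Finset.mem_singleton, Finset.mem_univ, iff_true]
    rcases htot i with h|h|h|h|h|h|h|h|h <;> tauto
  have hUc5 : A1 ∪ {e} ∪ ((A2 ∪ A3 ∪ B2 ∪ B3 ∪ B4) ∪ (A4 ∪ B1)) = Finset.univ := by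
    ext i
    simp only [Finset.mem_union, Finset.mem_singleton, Finset.mem_univ, iff_true]
    rcases htot i with h|h|h|h|h|h|h|h|h <;> tauto
  have hUc6 : B1 ∪ {e} ∪ ((A2 ∪ A3 ∪ A4 ∪ B2 ∪ B3) ∪ (A1 ∪ B4)) = Finset.univ := by
    ext i
    simp only [Finset.mem_union, Finset.mem_singleton, Finset.mem_univ, iff_true]
    rcases htot i with h|h|h|h|h|h|h|h|h <;> tauto
  -- e-nonmembership in unions
  have heX2 : e ∉ A1 ∪ A2 ∪ B3 ∪ B4 := by simp [Finset.mem_union, he1, he2, he7, he8]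
  have heY2 : e ∉ B1 ∪ B2 ∪ A3 ∪ A4 := by simp [Finset.mem_union, he5, he6, he3, he4]
  have heX3 : e ∉ A1 ∪ A3 ∪ B2 ∪ B4 := by simp [Finset.mem_union, he1, he3, he6, he8]
  have heY3 : e ∉ B1 ∪ B3 ∪ A2 ∪ A4 := by simp [Finset.mem_union, he5, he7, he2, he4]
  have heAg : e ∉ A1 ∪ A2 ∪ A3 ∪ A4 := by simp [Finset.mem_union, he1, he2, he3, he4]
  have heBg : e ∉ B1 ∪ B2 ∪ B3 ∪ B4 := by simp [Finset.mem_union, he5, he6, he7, he8]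
  have heWA : e ∉ A2 ∪ A3 ∪ A4 ∪ B1 ∪ B2 ∪ B3 ∪ B4 := by
    simp [Finset.mem_union, he2, he3, he4, he5, he6, he7, he8]
  have heWB : e ∉ A1 ∪ A2 ∪ A3 ∪ A4 ∪ B2 ∪ B3 ∪ B4 := by
    simp [Finset.mem_union, he1, he2, he3, he4, he6, he7, he8]
  have heW1 : e ∉ A2 ∪ A3 ∪ A4 ∪ B3 ∪ B4 := by simp [Finset.mem_union, he2, he3, he4, he7, he8]
  have heW2 : e ∉ A3 ∪ A4 ∪ B2 ∪ B3 ∪ B4 := by simp [Finset.mem_union, he3, he4, he6, he7, he8]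
  have heW3 : e ∉ A2 ∪ A3 ∪ A4 ∪ B2 ∪ B4 := by simp [Finset.mem_union, he2, he3, he4, he6, he8]
  have heW4 : e ∉ A2 ∪ A4 ∪ B2 ∪ B3 ∪ B4 := by simp [Finset.mem_union, he2, he4, he6, he7, he8]
  have heW5 : e ∉ A2 ∪ A3 ∪ B2 ∪ B3 ∪ B4 := by simp [Finset.mem_union, he2, he3, he6, he7, he8]
  have heW6 : e ∉ A2 ∪ A3 ∪ A4 ∪ B2 ∪ B3 := by simp [Finset.mem_union, he2, he3, he4, he6, he7]
  have heD1 : e ∉ B1 ∪ B2 := by simp [Finset.mem_union, he5, he6]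
  have heD2 : e ∉ A1 ∪ A2 := by simp [Finset.mem_union, he1, he2]
  have heD3 : e ∉ B1 ∪ B3 := by simp [Finset.mem_union, he5, he7]
  have heD4 : e ∉ A1 ∪ A3 := by simp [Finset.mem_union, he1, he3]
  have heD5 : e ∉ A4 ∪ B1 := by simp [Finset.mem_union, he4, he5]
  have heD6 : e ∉ A1 ∪ B4 := by simp [Finset.mem_union, he1, he8]
  -- disjointness of unions
  have hXY2 : Disjoint (A1 ∪ A2 ∪ B3 ∪ B4) (B1 ∪ B2 ∪ A3 ∪ A4) := by
    simp only [Finset.disjoint_union_left, Finset.disjoint_union_right]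
    repeat' apply And.intro
    all_goals first | assumption | (apply Disjoint.symm; assumption)
  have hXY3 : Disjoint (A1 ∪ A3 ∪ B2 ∪ B4) (B1 ∪ B3 ∪ A2 ∪ A4) := by
    simp only [Finset.disjoint_union_left, Finset.disjoint_union_right]
    repeat' apply And.intro
    all_goals first | assumption | (apply Disjoint.symm; assumption)
  have hABq : Disjoint (A1 ∪ A2 ∪ A3 ∪ A4) (B1 ∪ B2 ∪ B3 ∪ B4) := by
    simp only [Finset.disjoint_union_left, Finset.disjoint_union_right]
    repeat' apply And.intro
    all_goals first | assumption | (apply Disjoint.symm; assumption)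
  have hd1WA : Disjoint A1 (A2 ∪ A3 ∪ A4 ∪ B1 ∪ B2 ∪ B3 ∪ B4) := by
    simp only [Finset.disjoint_union_right]
    repeat' apply And.intro
    all_goals first | assumption | (apply Disjoint.symm; assumption)
  have hd5WB : Disjoint B1 (A1 ∪ A2 ∪ A3 ∪ A4 ∪ B2 ∪ B3 ∪ B4) := by
    simp only [Finset.disjoint_union_right]
    repeat' apply And.intro
    all_goals first | assumption | (apply Disjoint.symm; assumption)
  have dB1X2 : Disjoint B1 (A1 ∪ A2 ∪ B3 ∪ B4) := by
    simp only [Finset.disjoint_union_right]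
    repeat' apply And.intro
    all_goals first | assumption | (apply Disjoint.symm; assumption)
  have dB1X3 : Disjoint B1 (A1 ∪ A3 ∪ B2 ∪ B4) := by
    simp only [Finset.disjoint_union_right]
    repeat' apply And.intro
    all_goals first | assumption | (apply Disjoint.symm; assumption)
  have dB1Ag : Disjoint B1 (A1 ∪ A2 ∪ A3 ∪ A4) := by
    simp only [Finset.disjoint_union_right]
    repeat' apply And.intro
    all_goals first | assumption | (apply Disjoint.symm; assumption)
  have dB2X2 : Disjoint B2 (A1 ∪ A2 ∪ B3 ∪ B4) := by
    simp only [Finset.disjoint_union_right]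
    repeat' apply And.intro
    all_goals first | assumption | (apply Disjoint.symm; assumption)
  have dB2Ag : Disjoint B2 (A1 ∪ A2 ∪ A3 ∪ A4) := by
    simp only [Finset.disjoint_union_right]
    repeat' apply And.intro
    all_goals first | assumption | (apply Disjoint.symm; assumption)
  have dB3X3 : Disjoint B3 (A1 ∪ A3 ∪ B2 ∪ B4) := by
    simp only [Finset.disjoint_union_right]
    repeat' apply And.intro
    all_goals first | assumption | (apply Disjoint.symm; assumption)
  have dB3Ag : Disjoint B3 (A1 ∪ A2 ∪ A3 ∪ A4) := by
    simp only [Finset.disjoint_union_right]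
    repeat' apply And.intro
    all_goals first | assumption | (apply Disjoint.symm; assumption)
  have dA4X2 : Disjoint A4 (A1 ∪ A2 ∪ B3 ∪ B4) := by
    simp only [Finset.disjoint_union_right]
    repeat' apply And.intro
    all_goals first | assumption | (apply Disjoint.symm; assumption)
  have dA4X3 : Disjoint A4 (A1 ∪ A3 ∪ B2 ∪ B4) := by
    simp only [Finset.disjoint_union_right]
    repeat' apply And.intro
    all_goals first | assumption | (apply Disjoint.symm; assumption)
  -- subsets
  have sA1X2 : A1 ⊆ A1 ∪ A2 ∪ B3 ∪ B4 := by intro i hi; simp only [Finset.mem_union]; tauto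
  have sA1X3 : A1 ⊆ A1 ∪ A3 ∪ B2 ∪ B4 := by intro i hi; simp only [Finset.mem_union]; tauto
  have sA1Ag : A1 ⊆ A1 ∪ A2 ∪ A3 ∪ A4 := by intro i hi; simp only [Finset.mem_union]; tauto
  have sA2X2 : A2 ⊆ A1 ∪ A2 ∪ B3 ∪ B4 := by intro i hi; simp only [Finset.mem_union]; tauto
  have sA2Ag : A2 ⊆ A1 ∪ A2 ∪ A3 ∪ A4 := by intro i hi; simp only [Finset.mem_union]; tauto
  have sA3X3 : A3 ⊆ A1 ∪ A3 ∪ B2 ∪ B4 := by intro i hi; simp only [Finset.mem_union]; tauto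
  have sA3Ag : A3 ⊆ A1 ∪ A2 ∪ A3 ∪ A4 := by intro i hi; simp only [Finset.mem_union]; tauto
  have sB4X2 : B4 ⊆ A1 ∪ A2 ∪ B3 ∪ B4 := by intro i hi; simp only [Finset.mem_union]; tauto
  have sB4X3 : B4 ⊆ A1 ∪ A3 ∪ B2 ∪ B4 := by intro i hi; simp only [Finset.mem_union]; tauto
  -- complements
  have sB1X2c : B1 ⊆ (A1 ∪ A2 ∪ B3 ∪ B4)ᶜ := subset_compl_of_disj dB1X2
  have sB1X3c : B1 ⊆ (A1 ∪ A3 ∪ B2 ∪ B4)ᶜ := subset_compl_of_disj dB1X3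
  have sB1Agc : B1 ⊆ (A1 ∪ A2 ∪ A3 ∪ A4)ᶜ := subset_compl_of_disj dB1Ag
  have dA1X2c : Disjoint A1 (A1 ∪ A2 ∪ B3 ∪ B4)ᶜ := disj_compl_of_subset sA1X2
  have dA1X3c : Disjoint A1 (A1 ∪ A3 ∪ B2 ∪ B4)ᶜ := disj_compl_of_subset sA1X3
  have dA2X2c : Disjoint A2 (A1 ∪ A2 ∪ B3 ∪ B4)ᶜ := disj_compl_of_subset sA2X2
  have dA2Agc : Disjoint A2 (A1 ∪ A2 ∪ A3 ∪ A4)ᶜ := disj_compl_of_subset sA2Ag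
  have dA3X3c : Disjoint A3 (A1 ∪ A3 ∪ B2 ∪ B4)ᶜ := disj_compl_of_subset sA3X3
  have dA3Agc : Disjoint A3 (A1 ∪ A2 ∪ A3 ∪ A4)ᶜ := disj_compl_of_subset sA3Ag
  have dD5X2 : Disjoint (A4 ∪ B1) (A1 ∪ A2 ∪ B3 ∪ B4) := by
    simp only [Finset.disjoint_union_left]
    exact ⟨dA4X2, dB1X2⟩
  have dD5X3 : Disjoint (A4 ∪ B1) (A1 ∪ A3 ∪ B2 ∪ B4) := by
    simp only [Finset.disjoint_union_left]
    exact ⟨dA4X3, dB1X3⟩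
  have dD6X2c : Disjoint (A1 ∪ B4) (A1 ∪ A2 ∪ B3 ∪ B4)ᶜ :=
    disj_compl_of_subset (Finset.union_subset sA1X2 sB4X2)
  have dD6X3c : Disjoint (A1 ∪ B4) (A1 ∪ A3 ∪ B2 ∪ B4)ᶜ :=
    disj_compl_of_subset (Finset.union_subset sA1X3 sB4X3)
  have dempty : ∀ S : Finset ι, Disjoint (∅ : Finset ι) S := fun S => Finset.disjoint_empty_left S
  -- cross identities
  have cu : CrossOn (fun ω => P (Function.update ω e b)) (A1 ∪ A2 ∪ B3 ∪ B4) :=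
    crossOn_of_CIGV hpos hXY2 heX2 heY2 hU2 I2
  have cw : CrossOn (fun ω => P (Function.update ω e (!b))) (A1 ∪ A3 ∪ B2 ∪ B4) :=
    crossOn_of_CIGV hpos hXY3 heX3 heY3 hU3 I3
  have cq0 : CrossOn (fun ω => P (Function.update ω e true) + P (Function.update ω e false))
      (A1 ∪ A2 ∪ A3 ∪ A4) := crossOn_Q hsum hABq heAg heBg hUq I1
  have cq : CrossOn (fun ω => P (Function.update ω e b) + P (Function.update ω e (!b)))
      (A1 ∪ A2 ∪ A3 ∪ A4) := by
    cases b
    · rw [show (fun ω : ι → Bool => P (Function.update ω e false) +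
          P (Function.update ω e (!false))) = fun ω => P (Function.update ω e true) +
          P (Function.update ω e false) from funext fun ω => by
            rw [Bool.not_false]; exact add_comm _ _]
      exact cq0
    · rw [show (fun ω : ι → Bool => P (Function.update ω e true) +
          P (Function.update ω e (!true))) = fun ω => P (Function.update ω e true) +
          P (Function.update ω e false) from funext fun ω => by rw [Bool.not_true]]
      exact cq0
  have cq' : CrossOn (fun ω => P (Function.update ω e (!b)) + P (Function.update ω e b))
      (A1 ∪ A2 ∪ A3 ∪ A4) := by
    rw [show (fun ω : ι → Bool => P (Function.update ω e (!b)) + P (Function.update ω e b)) =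
      fun ω => P (Function.update ω e b) + P (Function.update ω e (!b)) from
        funext fun ω => add_comm _ _]
    exact cq
  have hu : ∀ ω : ι → Bool, (0:ℝ) < P (Function.update ω e b) := fun ω => hpos _
  have hw : ∀ ω : ι → Bool, (0:ℝ) < P (Function.update ω e (!b)) := fun ω => hpos _
  refine ⟨?_, ?_, ?_, ?_, ?_, ?_⟩
  -- case (i)
  · intro H0
    have MC := main_transfer (fun ω => P (Function.update ω e b))
      (fun ω => P (Function.update ω e (!b))) hu hw
      (A1 ∪ A2 ∪ B3 ∪ B4) (A1 ∪ A3 ∪ B2 ∪ B4) (A1 ∪ A2 ∪ A3 ∪ A4) A1 B1 B2 v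
      cu cw cq sA1X2 sA1X3 sA1Ag dB1X2 dB1X3 dB2X2 dB2Ag
      (hypconv hpos b he1 heWA hd1WA hUA H0)
    refine cclconv hpos b he1 heW1 heD1 hUc1 ?_
    intro ω ω' hω hω'
    exact MC ω ω' (fun i hi => hω i fun hmem => hi (by
      simp only [Finset.mem_union] at hmem ⊢; tauto)) hω'
  -- case (ii)
  · intro H0
    have MC := main_transfer (fun ω => P (Function.update ω e b))
      (fun ω => P (Function.update ω e (!b))) hu hw
      (A1 ∪ A2 ∪ B3 ∪ B4)ᶜ (A1 ∪ A3 ∪ B2 ∪ B4)ᶜ (A1 ∪ A2 ∪ A3 ∪ A4)ᶜ B1 A1 A2 v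
      cu.compl cw.compl cq.compl sB1X2c sB1X3c sB1Agc dA1X2c dA1X3c dA2X2c dA2Agc
      (hypconv hpos b he5 heWB hd5WB hUB H0)
    refine cclconv hpos b he5 heW2 heD2 hUc2 ?_
    intro ω ω' hω hω'
    exact MC ω ω' (fun i hi => hω i fun hmem => hi (by
      simp only [Finset.mem_union] at hmem ⊢; tauto)) hω'
  -- case (iii)
  · intro H0
    have Hyp := hypconv hpos b he1 heWA hd1WA hUA H0
    have MC := main_transfer (fun ω => P (Function.update ω e (!b)))
      (fun ω => P (Function.update ω e b)) hw hu
      (A1 ∪ A3 ∪ B2 ∪ B4) (A1 ∪ A2 ∪ B3 ∪ B4) (A1 ∪ A2 ∪ A3 ∪ A4) A1 B1 B3 v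
      cw cu cq' sA1X3 sA1X2 sA1Ag dB1X3 dB1X2 dB3X3 dB3Ag
      (fun ω ω' h h' => by have h0 := Hyp ω' ω h' h; linear_combination h0)
    refine cclconv hpos b he1 heW3 heD3 hUc3 ?_
    intro ω ω' hω hω'
    have h0 := MC ω ω' (fun i hi => hω i fun hmem => hi (by
      simp only [Finset.mem_union] at hmem ⊢; tauto)) hω'
    linear_combination -h0
  -- case (iv)
  · intro H0
    have Hyp := hypconv hpos b he5 heWB hd5WB hUB H0
    have MC := main_transfer (fun ω => P (Function.update ω e (!b)))
      (fun ω => P (Function.update ω e b)) hw hu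
      (A1 ∪ A3 ∪ B2 ∪ B4)ᶜ (A1 ∪ A2 ∪ B3 ∪ B4)ᶜ (A1 ∪ A2 ∪ A3 ∪ A4)ᶜ B1 A1 A3 v
      cw.compl cu.compl cq'.compl sB1X3c sB1X2c sB1Agc dA1X3c dA1X2c dA3X3c dA3Agc
      (fun ω ω' h h' => by have h0 := Hyp ω' ω h' h; linear_combination h0)
    refine cclconv hpos b he5 heW4 heD4 hUc4 ?_
    intro ω ω' hω hω'
    have h0 := MC ω ω' (fun i hi => hω i fun hmem => hi (by
      simp only [Finset.mem_union] at hmem ⊢; tauto)) hω'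
    linear_combination -h0
  -- case (v)
  · intro H0
    have MC := main_transfer (fun ω => P (Function.update ω e b))
      (fun ω => P (Function.update ω e (!b))) hu hw
      (A1 ∪ A2 ∪ B3 ∪ B4) (A1 ∪ A3 ∪ B2 ∪ B4) (A1 ∪ A2 ∪ A3 ∪ A4) A1 (A4 ∪ B1) ∅ v
      cu cw cq sA1X2 sA1X3 sA1Ag dD5X2 dD5X3 (dempty _) (dempty _)
      (hypconv hpos b he1 heWA hd1WA hUA H0)
    refine cclconv hpos b he1 heW5 heD5 hUc5 ?_
    intro ω ω' hω hω'
    exact MC ω ω' (fun i hi => hω i fun hmem => hi (by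
      simp only [Finset.mem_union, Finset.notMem_empty] at hmem ⊢; tauto)) hω'
  -- case (vi)
  · intro H0
    have MC := main_transfer (fun ω => P (Function.update ω e b))
      (fun ω => P (Function.update ω e (!b))) hu hw
      (A1 ∪ A2 ∪ B3 ∪ B4)ᶜ (A1 ∪ A3 ∪ B2 ∪ B4)ᶜ (A1 ∪ A2 ∪ A3 ∪ A4)ᶜ B1 (A1 ∪ B4) ∅ v
      cu.compl cw.compl cq.compl sB1X2c sB1X3c sB1Agc dD6X2c dD6X3c (dempty _) (dempty _)
      (hypconv hpos b he5 heWB hd5WB hUB H0)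
    refine cclconv hpos b he5 heW6 heD6 hUc6 ?_
    intro ω ω' hω hω'
    exact MC ω ω' (fun i hi => hω i fun hmem => hi (by
      simp only [Finset.mem_union, Finset.notMem_empty] at hmem ⊢; tauto)) hω'
end

section
/- Let A1, A2, A3, A4, B1, B2, B3, B4 be pairwise disjoint sets of variables, e a binary variable not contained in any of them, C = A2∪A3∪A4 and D = B2∪B3∪B4, and let P be a strictly positive binary probability distribution over their union together with {e}. Suppose: I(A1∪A2∪A3∪A4, B1∪B2∪B3∪B4 | ∅); I(A1∪A2∪B3∪B4, B1∪B2∪A3∪A4 | e = e'); and I(A1∪A3∪B2∪B4, B1∪B3∪A2∪A4 | e = e''), where e' and e'' are the two distinct values of e. Then either I(A1, e | C ∪ D ∪ B1) holds for P or I(B1, e | C ∪ D ∪ A1) holds for P. -/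
set_option linter.unusedSectionVars false
set_option maxHeartbeats 4000000

variable {ι : Type*} [Fintype ι] [DecidableEq ι]

/- ### Auxiliary lemmas about `margin` -/

theorem margin_congr (P : (ι → Bool) → ℝ) (S : Finset ι) {s t : ι → Bool}
    (h : ∀ i ∈ S, s i = t i) : margin P S s = margin P S t := by
  unfold margin
  refine Finset.sum_congr rfl fun ω _ => ?_
  refine if_congr ⟨fun hw i hi => (hw i hi).trans (h i hi),
    fun hw i hi => (hw i hi).trans (h i hi).symm⟩ rfl rfl

theorem margin_pos (P : (ι → Bool) → ℝ) (hpos : ∀ ω, 0 < P ω) (S : Finset ι) (s : ι → Bool) :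
    0 < margin P S s := by
  unfold margin
  refine Finset.sum_pos' (fun ω _ => ?_) ⟨s, Finset.mem_univ s, ?_⟩
  · by_cases hc : ∀ i ∈ S, ω i = s i
    · rw [if_pos hc]; exact (hpos ω).le
    · rw [if_neg hc]
  · rw [if_pos (fun i _ => rfl)]; exact hpos s

theorem margin_univ (P : (ι → Bool) → ℝ) (s : ι → Bool) : margin P Finset.univ s = P s := by
  unfold margin
  rw [Finset.sum_eq_single s]
  · rw [if_pos (fun i _ => rfl)]
  · intro ω _ hne
    rw [if_neg]
    intro hw
    exact hne (funext fun i => hw i (Finset.mem_univ i))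
  · intro hs; exact absurd (Finset.mem_univ s) hs

theorem margin_empty (P : (ι → Bool) → ℝ) (s : ι → Bool) :
    margin P (∅ : Finset ι) s = ∑ ω : ι → Bool, P ω := by
  unfold margin
  refine Finset.sum_congr rfl fun ω _ => ?_
  rw [if_pos (fun i hi => absurd hi (Finset.notMem_empty i))]

theorem cond_insert_iff {e : ι} {Z : Finset ι} (heZ : e ∉ Z) (s ω : ι → Bool) (c : Bool) :
    (∀ i ∈ insert e Z, ω i = Function.update s e c i) ↔ (ω e = c ∧ ∀ i ∈ Z, ω i = s i) := by
  constructor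
  · intro h
    refine ⟨by simpa using h e (Finset.mem_insert_self e Z), fun i hi => ?_⟩
    have hne : i ≠ e := fun h' => heZ (by rw [← h']; exact hi)
    have := h i (Finset.mem_insert_of_mem hi)
    rwa [Function.update_of_ne hne] at this
  · rintro ⟨h1, h2⟩ i hi
    rcases Finset.mem_insert.mp hi with rfl | hi'
    · simpa using h1
    · rw [Function.update_of_ne (fun h' => heZ (by rw [← h']; exact hi'))]; exact h2 i hi'

theorem margin_split (P : (ι → Bool) → ℝ) {e : ι} {S : Finset ι} (he : e ∉ S) (s : ι → Bool) :
    margin P S s = margin P (insert e S) (Function.update s e false)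
      + margin P (insert e S) (Function.update s e true) := by
  unfold margin
  rw [← Finset.sum_add_distrib]
  refine Finset.sum_congr rfl fun ω _ => ?_
  rw [if_congr (cond_insert_iff he s ω false) rfl rfl, if_congr (cond_insert_iff he s ω true) rfl rfl]
  by_cases hC : ∀ i ∈ S, ω i = s i
  · rcases Bool.eq_false_or_eq_true (ω e) with hb | hb <;> simp [hC, hb]
  · simp [hC]

theorem margin_split_b (P : (ι → Bool) → ℝ) {e : ι} {S : Finset ι} (he : e ∉ S) (s : ι → Bool)
    (b : Bool) :
    margin P S s = margin P (insert e S) (Function.update s e b)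
      + margin P (insert e S) (Function.update s e (!b)) := by
  rcases Bool.eq_false_or_eq_true b with hb | hb <;> subst hb <;>
    simp only [Bool.not_true, Bool.not_false]
  · rw [margin_split P he s, add_comm]
  · exact margin_split P he s

theorem flip_involutive (e : ι) :
    Function.Involutive (fun ω : ι → Bool => Function.update ω e (!(ω e))) := by
  intro ω
  funext i
  by_cases hi : i = e
  · subst hi
    simp [Function.update_self, Bool.not_not]
  · simp [Function.update_of_ne hi]

/-- Reduction: a pointwise "odds ratio" condition implies the conditional
independence `I(W, e | Z)`. -/
theorem indep_red (P : (ι → Bool) → ℝ) (W Z : Finset ι) (e : ι)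
    (heW : e ∉ W) (heZ : e ∉ Z) (hU : insert e (W ∪ Z) = Finset.univ) (b : Bool)
    (h : ∀ s t : ι → Bool, (∀ i ∈ Z, s i = t i) →
      P (Function.update s e b) * P (Function.update t e (!b)) =
        P (Function.update s e (!b)) * P (Function.update t e b)) :
    CondIndep P W {e} Z := by
  intro s
  have hWZu : W ∪ {e} ∪ Z = Finset.univ := by
    rw [← hU]; ext i
    simp only [Finset.mem_union, Finset.mem_insert, Finset.mem_singleton]
    tauto
  have hZe : ({e} : Finset ι) ∪ Z = insert e Z := by
    ext i
    simp only [Finset.mem_union, Finset.mem_insert, Finset.mem_singleton]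
  have heWZ : e ∉ W ∪ Z := by simp [heW, heZ]
  have hkey : ∀ c : Bool, margin P (insert e Z) (Function.update s e c) =
      ∑ ω : ι → Bool, if (ω e = c ∧ ∀ i ∈ Z, ω i = s i) then P ω else 0 := by
    intro c
    unfold margin
    exact Finset.sum_congr rfl fun ω _ => if_congr (cond_insert_iff heZ s ω c) rfl rfl
  have hm4 : margin P ({e} ∪ Z) s = margin P (insert e Z) (Function.update s e (s e)) := by
    rw [hZe, Function.update_eq_self]
  have hm3 : margin P (W ∪ Z) s
      = P (Function.update s e b) + P (Function.update s e (!b)) := by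
    rw [margin_split_b P heWZ s b, hU, margin_univ, margin_univ]
  have hm2 : margin P Z s = margin P (insert e Z) (Function.update s e b)
      + margin P (insert e Z) (Function.update s e (!b)) := margin_split_b P heZ s b
  have hcross : P (Function.update s e b) * margin P (insert e Z) (Function.update s e (!b))
      = P (Function.update s e (!b)) * margin P (insert e Z) (Function.update s e b) := by
    rw [hkey b, hkey (!b), Finset.mul_sum, Finset.mul_sum]
    have hstep : ∀ ω : ι → Bool,
        (P (Function.update s e b) * if (ω e = !b ∧ ∀ i ∈ Z, ω i = s i) then P ω else 0)
        = (if (ω e = !b ∧ ∀ i ∈ Z, ω i = s i) then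
            P (Function.update s e (!b)) * P (Function.update ω e b) else 0) := by
      intro ω
      by_cases hc : ω e = !b ∧ ∀ i ∈ Z, ω i = s i
      · rw [if_pos hc, if_pos hc]
        obtain ⟨hωe, hωZ⟩ := hc
        have hω : Function.update ω e (!b) = ω := by rw [← hωe, Function.update_eq_self]
        calc P (Function.update s e b) * P ω
            = P (Function.update s e b) * P (Function.update ω e (!b)) := by rw [hω]
          _ = P (Function.update s e (!b)) * P (Function.update ω e b) :=
            h s ω (fun i hi => (hωZ i hi).symm)
      · rw [if_neg hc, if_neg hc, mul_zero]
    rw [Finset.sum_congr rfl (fun ω _ => hstep ω)]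
    simp only [mul_ite, mul_zero]
    have hre := Equiv.sum_comp ((flip_involutive e).toPerm _)
      (fun ω : ι → Bool => if (ω e = !b ∧ ∀ i ∈ Z, ω i = s i) then
        P (Function.update s e (!b)) * P (Function.update ω e b) else 0)
    rw [← hre]
    refine Finset.sum_congr rfl fun ω _ => ?_
    simp only [Function.Involutive.coe_toPerm]
    by_cases hb1 : ω e = b
    · have h1 : Function.update ω e (!(ω e)) e = !b := by
        rw [Function.update_self, hb1]
      have h2 : ∀ i ∈ Z, Function.update ω e (!(ω e)) i = s i ↔ ω i = s i := by
        intro i hi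
        rw [Function.update_of_ne (fun h' => heZ (by rw [← h']; exact hi))]
      have h3 : Function.update (Function.update ω e (!(ω e))) e b = ω := by
        rw [Function.update_idem, ← hb1, Function.update_eq_self]
      by_cases hC : ∀ i ∈ Z, ω i = s i
      · rw [if_pos ⟨hb1, hC⟩]
        simp only [if_pos (show Function.update ω e (!(ω e)) e = !b ∧ ∀ i ∈ Z, Function.update ω e (!(ω e)) i = s i from ⟨h1, fun i hi => (h2 i hi).mpr (hC i hi)⟩), h3]
      · rw [if_neg (fun hc : ω e = b ∧ ∀ i ∈ Z, ω i = s i => hC hc.2)]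
        exact if_neg (show ¬(Function.update ω e (!(ω e)) e = !b ∧ ∀ i ∈ Z, Function.update ω e (!(ω e)) i = s i) from fun hc => hC (fun i hi => (h2 i hi).mp (hc.2 i hi)))
    · have hωe : ω e = !b := by
        rcases Bool.eq_false_or_eq_true b with hb | hb <;> subst hb <;>
          rcases Bool.eq_false_or_eq_true (ω e) with hb' | hb' <;> simp_all
      have h1 : ¬ (Function.update ω e (!(ω e)) e = !b) := by
        rw [Function.update_self, hωe, Bool.not_not]
        rcases Bool.eq_false_or_eq_true b with hb | hb <;> subst hb <;> simp
      rw [if_neg (fun hc : ω e = b ∧ ∀ i ∈ Z, ω i = s i => hb1 hc.1)]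
      exact if_neg (show ¬(Function.update ω e (!(ω e)) e = !b ∧ ∀ i ∈ Z, Function.update ω e (!(ω e)) i = s i) from fun hc => h1 hc.1)
  rw [hWZu, margin_univ, hm2, hm3, hm4]
  have hse : s e = b ∨ s e = !b := by
    rcases Bool.eq_false_or_eq_true b with hb | hb <;> subst hb <;>
      rcases Bool.eq_false_or_eq_true (s e) with hb' | hb' <;> simp [hb']
  have hPs : ∀ c : Bool, s e = c → P s = P (Function.update s e c) := by
    intro c hc; rw [← hc, Function.update_eq_self]
  rcases hse with hc | hc
  · rw [hc, hPs _ hc]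
    linear_combination hcross
  · rw [hc, hPs _ hc]
    linear_combination (-1 : ℝ) * hcross

theorem aux_zero {c d X Y : ℝ} (hc : 0 < c) (hd : 0 < d) (h : c * X = d * Y) :
    (X = 0 ↔ Y = 0) := by
  constructor
  · intro h0; rw [h0, mul_zero] at h
    rcases mul_eq_zero.mp h.symm with h' | h'
    · exact absurd h' hd.ne'
    · exact h'
  · intro h0; rw [h0, mul_zero] at h
    rcases mul_eq_zero.mp h with h' | h'
    · exact absurd h' hc.ne'
    · exact h'

/-- The abstract algebraic core of the argument. -/
theorem indep_core (F F' K K' Φ Ψ : Bool → Bool → Bool → ℝ)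
    (hF : ∀ a m n, 0 < F a m n) (hF' : ∀ a p q, 0 < F' a p q)
    (hK : ∀ b p q, 0 < K b p q) (hK' : ∀ b m n, 0 < K' b m n)
    (hΦ : ∀ a m p, 0 < Φ a m p) (hΨ : ∀ b q n, 0 < Ψ b q n)
    (hE : ∀ a b m n p q, F a m n * K b p q + F' a p q * K' b m n = Φ a m p * Ψ b q n)
    (hNA : F true false false * F' false false false ≠ F false false false * F' true false false)
    (hNB : K' true true true * K false true true ≠ K' false true true * K true true true) :
    False := by
  have hdiv : ∀ {x y u v : ℝ}, 0 < y → 0 < v → (x / y = u / v ↔ x * v = u * y) :=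
    fun hy hv => div_eq_div_iff hy.ne' hv.ne'
  set f : Bool → Bool → ℝ := fun m n => F true m n / F false m n with hfdef
  set f' : Bool → Bool → ℝ := fun p q => F' true p q / F' false p q with hf'def
  set k : Bool → Bool → ℝ := fun p q => K true p q / K false p q with hkdef
  set k' : Bool → Bool → ℝ := fun m n => K' true m n / K' false m n with hk'def
  set lam : Bool → Bool → ℝ := fun m p => Φ true m p / Φ false m p with hlamdef
  set mu : Bool → Bool → ℝ := fun q n => Ψ true q n / Ψ false q n with hmudef
  have R1 : ∀ m n p q, f m n = f' p q ∨ k p q = k' m n := by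
    intro m n p q
    have key : (F true m n * F' false p q - F false m n * F' true p q) *
        (K true p q * K' false m n - K false p q * K' true m n) = 0 := by
      linear_combination (F true m n * K true p q + F' true p q * K' true m n) * hE false false m n p q
        + (Φ false m p * Ψ false q n) * hE true true m n p q
        - (F true m n * K false p q + F' true p q * K' false m n) * hE false true m n p q
        - (Φ false m p * Ψ true q n) * hE true false m n p q
    rcases mul_eq_zero.mp key with h0 | h0
    · left
      rw [hdiv (hF false m n) (hF' false p q)]
      linear_combination h0
    · right
      rw [hdiv (hK false p q) (hK' false m n)]
      linear_combination h0
  have l1 : ∀ m n p q, (lam m p = f m n ↔ f m n = f' p q) := by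
    intro m n p q
    have hb : K' false m n * (F false m n * F' true p q - F true m n * F' false p q)
        = Ψ false q n * (Φ true m p * F false m n - Φ false m p * F true m n) := by
      linear_combination F false m n * hE true false m n p q - F true m n * hE false false m n p q
    have hz := aux_zero (hK' false m n) (hΨ false q n) hb
    rw [hdiv (hΦ false m p) (hF false m n), hdiv (hF false m n) (hF' false p q)]
    constructor
    · intro h
      have h2 : F false m n * F' true p q - F true m n * F' false p q = 0 :=
        hz.mpr (by linear_combination h)
      linear_combination -h2
    · intro h
      have h2 : Φ true m p * F false m n - Φ false m p * F true m n = 0 :=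
        hz.mp (by linear_combination -h)
      linear_combination h2
  have l2 : ∀ m n p q, (lam m p = f' p q ↔ f m n = f' p q) := by
    intro m n p q
    have hb : K false p q * (F true m n * F' false p q - F false m n * F' true p q)
        = Ψ false q n * (Φ true m p * F' false p q - Φ false m p * F' true p q) := by
      linear_combination F' false p q * hE true false m n p q - F' true p q * hE false false m n p q
    have hz := aux_zero (hK false p q) (hΨ false q n) hb
    rw [hdiv (hΦ false m p) (hF' false p q), hdiv (hF false m n) (hF' false p q)]
    constructor
    · intro h
      have h2 : F true m n * F' false p q - F false m n * F' true p q = 0 :=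
        hz.mpr (by linear_combination h)
      linear_combination h2
    · intro h
      have h2 : Φ true m p * F' false p q - Φ false m p * F' true p q = 0 :=
        hz.mp (by linear_combination h)
      linear_combination h2
  have l3 : ∀ m n p q, (mu q n = k p q ↔ k p q = k' m n) := by
    intro m n p q
    have hb : F' false p q * (K false p q * K' true m n - K true p q * K' false m n)
        = Φ false m p * (Ψ true q n * K false p q - Ψ false q n * K true p q) := by
      linear_combination K false p q * hE false true m n p q - K true p q * hE false false m n p q
    have hz := aux_zero (hF' false p q) (hΦ false m p) hb
    rw [hdiv (hΨ false q n) (hK false p q), hdiv (hK false p q) (hK' false m n)]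
    constructor
    · intro h
      have h2 : K false p q * K' true m n - K true p q * K' false m n = 0 :=
        hz.mpr (by linear_combination h)
      linear_combination -h2
    · intro h
      have h2 : Ψ true q n * K false p q - Ψ false q n * K true p q = 0 :=
        hz.mp (by linear_combination -h)
      linear_combination h2
  have l4 : ∀ m n p q, (mu q n = k' m n ↔ k p q = k' m n) := by
    intro m n p q
    have hb : F false m n * (K true p q * K' false m n - K false p q * K' true m n)
        = Φ false m p * (Ψ true q n * K' false m n - Ψ false q n * K' true m n) := by
      linear_combination K' false m n * hE false true m n p q - K' true m n * hE false false m n p q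
    have hz := aux_zero (hF false m n) (hΦ false m p) hb
    rw [hdiv (hΨ false q n) (hK' false m n), hdiv (hK false p q) (hK' false m n)]
    constructor
    · intro h
      have h2 : K true p q * K' false m n - K false p q * K' true m n = 0 :=
        hz.mpr (by linear_combination h)
      linear_combination h2
    · intro h
      have h2 : Ψ true q n * K' false m n - Ψ false q n * K' true m n = 0 :=
        hz.mp (by linear_combination h)
      linear_combination h2
  have NA : f false false ≠ f' false false := by
    rw [Ne, hdiv (hF false false false) (hF' false false false)]
    intro h; exact hNA (by linear_combination h)
  have NB : k' true true ≠ k true true := by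
    rw [Ne, hdiv (hK' false true true) (hK false true true)]
    intro h; exact hNB (by linear_combination h)
  have s1 : f true true = f' true true :=
    (R1 true true true true).resolve_right (fun h => NB h.symm)
  have s2 : k' false false = k false false :=
    ((R1 false false false false).resolve_left NA).symm
  have s3 : lam true true = f true true := (l1 true true true true).mpr s1
  have s4 : f' true false = f true true := ((l1 true true true false).mp s3).symm
  by_cases h5 : f' false false = f true true
  · have a1 : lam true false = f true true := (l1 true true false false).mpr h5.symm
    have a2 : f' false true = f true true := ((l1 true true false true).mp a1).symm
    have a4 : lam false false ≠ f true true := by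
      intro h
      exact NA ((l2 false false false false).mp (h.trans h5.symm))
    have a5 : f false true ≠ f true true := by
      intro h
      exact a4 ((l1 false true false false).mpr (h.trans h5.symm) |>.trans h)
    have a6 : ∀ p q, k p q = k' false true := by
      intro p q
      refine (R1 false true p q).resolve_left (fun h => a5 ?_)
      rcases Bool.eq_false_or_eq_true p with hp | hp <;>
        rcases Bool.eq_false_or_eq_true q with hq | hq <;> subst hp <;> subst hq
      · exact h.trans s1.symm
      · exact h.trans s4
      · exact h.trans a2
      · exact h.trans h5
    have a7 : k' false true = k false false := (a6 false false).symm
    have a8 : k true true = k false false := (a6 true true).trans a7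
    have a9 : mu true true = k false true :=
      (l3 false true false true).mpr (a6 false true)
    have a10 : mu true true = k true true :=
      a9.trans (((a6 false true).trans a7).trans a8.symm)
    exact NB ((l3 true true true true).mp a10).symm
  · have b1 : k' true true = k false false :=
      ((R1 true true false false).resolve_left (fun h => h5 h.symm)).symm
    have b2 : k true true ≠ k false false := fun h => NB (b1.trans h.symm)
    have b3 : f false false = f true true := by
      refine ((R1 false false true true).resolve_right (fun h => b2 ?_)).trans s1.symm
      exact h.trans s2
    have b4 : lam false true = f' true true := (l2 false false true true).mpr (b3.trans s1)
    have b5 : f false true = f true true := ((l2 false true true true).mp b4).trans s1.symm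
    have b6 : f true false = f true true := by
      have hs : lam true true = f' true true := s3.trans s1
      exact ((l2 true false true true).mp hs).trans s1.symm
    have b7 : lam false false ≠ f true true := by
      intro h
      exact NA ((l1 false false false false).mp (h.trans b3.symm))
    have b8 : f' false true ≠ f true true := by
      intro h
      exact b7 (((l2 false false false true).mpr (b3.trans h.symm)).trans h)
    have b9 : ∀ m n, k false true = k' m n := by
      intro m n
      refine (R1 m n false true).resolve_left (fun h => b8 ?_)
      rcases Bool.eq_false_or_eq_true m with hm | hm <;>
        rcases Bool.eq_false_or_eq_true n with hn | hn <;> subst hm <;> subst hn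
      · exact h.symm
      · exact h.symm.trans b6
      · exact h.symm.trans b5
      · exact h.symm.trans b3
    have b10 : k false true = k false false := (b9 true true).trans b1
    have b11 : mu true true = k' true true :=
      (l4 true true false true).mpr (b10.trans b1.symm)
    have b12 : k true true = k' true true := (l4 true true true true).mp b11
    exact b2 (b12.trans b1)

/-- Merge of the witness assignments according to block choices. -/
def mergeFn (A1 B1 A2 B3 A3 B2 A4 : Finset ι) (sa sa' sb sb' : ι → Bool)
    (a b m n p q : Bool) : ι → Bool := fun i =>
  if i ∈ A1 then (if a then sa' i else sa i)
  else if i ∈ B1 then (if b then sb' i else sb i)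
  else if i ∈ A2 then (if m then sb i else sa i)
  else if i ∈ B3 then (if n then sb i else sa i)
  else if i ∈ A3 then (if p then sb i else sa i)
  else if i ∈ B2 then (if q then sb i else sa i)
  else if i ∈ A4 then sb i
  else sa i
/-- Equation (p1) of the paper: with `C = A2∪A3∪A4` and `D = B2∪B3∪B4`, the
three independencies `I1`, `I2`, `I3` imply that `I(A1, e | C ∪ D ∪ B1)` or
`I(B1, e | C ∪ D ∪ A1)` holds for `P`. -/
theorem indep_e_given_rest
    (A1 A2 A3 A4 B1 B2 B3 B4 : Finset ι) (e : ι)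
    (hdisj : List.Pairwise Disjoint [A1, A2, A3, A4, B1, B2, B3, B4, ({e} : Finset ι)])
    (hUniv : A1 ∪ A2 ∪ A3 ∪ A4 ∪ B1 ∪ B2 ∪ B3 ∪ B4 ∪ {e} = Finset.univ)
    (P : (ι → Bool) → ℝ) (hpos : ∀ ω, 0 < P ω) (hsum : ∑ ω, P ω = 1)
    (b : Bool)
    (I1 : CondIndep P (A1 ∪ A2 ∪ A3 ∪ A4) (B1 ∪ B2 ∪ B3 ∪ B4) ∅)
    (I2 : CondIndepGivenVal P (A1 ∪ A2 ∪ B3 ∪ B4) (B1 ∪ B2 ∪ A3 ∪ A4) e b)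
    (I3 : CondIndepGivenVal P (A1 ∪ A3 ∪ B2 ∪ B4) (B1 ∪ B3 ∪ A2 ∪ A4) e (!b)) :
    CondIndep P A1 {e} ((A2 ∪ A3 ∪ A4) ∪ (B2 ∪ B3 ∪ B4) ∪ B1) ∨
      CondIndep P B1 {e} ((A2 ∪ A3 ∪ A4) ∪ (B2 ∪ B3 ∪ B4) ∪ A1) := by
  classical
  simp only [List.pairwise_cons, List.mem_cons, List.mem_singleton, List.not_mem_nil,
    forall_eq_or_imp, forall_eq, List.Pairwise.nil, and_true, IsEmpty.forall_iff] at hdisj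
  obtain ⟨⟨d12, d13, d14, d1B1, d1B2, d1B3, d1B4, d1e, -⟩,
    ⟨d23, d24, d2B1, d2B2, d2B3, d2B4, d2e, -⟩,
    ⟨d34, d3B1, d3B2, d3B3, d3B4, d3e, -⟩,
    ⟨d4B1, d4B2, d4B3, d4B4, d4e, -⟩,
    ⟨dB12, dB13, dB14, dB1e, -⟩,
    ⟨dB23, dB24, dB2e, -⟩,
    ⟨dB34, dB3e, -⟩, ⟨dB4e, -⟩, -⟩ := hdisj
  have heA1 : e ∉ A1 := Finset.disjoint_singleton_right.mp d1e
  have heA2 : e ∉ A2 := Finset.disjoint_singleton_right.mp d2e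
  have heA3 : e ∉ A3 := Finset.disjoint_singleton_right.mp d3e
  have heA4 : e ∉ A4 := Finset.disjoint_singleton_right.mp d4e
  have heB1 : e ∉ B1 := Finset.disjoint_singleton_right.mp dB1e
  have heB2 : e ∉ B2 := Finset.disjoint_singleton_right.mp dB2e
  have heB3 : e ∉ B3 := Finset.disjoint_singleton_right.mp dB3e
  have heB4 : e ∉ B4 := Finset.disjoint_singleton_right.mp dB4e
  have hall : ∀ i : ι, i ∈ A1 ∨ i ∈ A2 ∨ i ∈ A3 ∨ i ∈ A4 ∨ i ∈ B1 ∨ i ∈ B2 ∨ i ∈ B3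
      ∨ i ∈ B4 ∨ i = e := by
    intro i
    have hi : i ∈ A1 ∪ A2 ∪ A3 ∪ A4 ∪ B1 ∪ B2 ∪ B3 ∪ B4 ∪ {e} := by
      rw [hUniv]; exact Finset.mem_univ i
    simp only [Finset.mem_union, Finset.mem_singleton] at hi
    rcases hi with ((((((((h | h) | h) | h) | h) | h) | h) | h) | h)
    · exact Or.inl h
    · exact Or.inr (Or.inl h)
    · exact Or.inr (Or.inr (Or.inl h))
    · exact Or.inr (Or.inr (Or.inr (Or.inl h)))
    · exact Or.inr (Or.inr (Or.inr (Or.inr (Or.inl h))))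
    · exact Or.inr (Or.inr (Or.inr (Or.inr (Or.inr (Or.inl h)))))
    · exact Or.inr (Or.inr (Or.inr (Or.inr (Or.inr (Or.inr (Or.inl h))))))
    · exact Or.inr (Or.inr (Or.inr (Or.inr (Or.inr (Or.inr (Or.inr (Or.inl h)))))))
    · exact Or.inr (Or.inr (Or.inr (Or.inr (Or.inr (Or.inr (Or.inr (Or.inr h)))))))
  -- contradiction setup
  by_contra hcon
  push_neg at hcon
  obtain ⟨hA, hB⟩ := hcon
  -- witnesses for failure of goal A
  have heZA : e ∉ (A2 ∪ A3 ∪ A4) ∪ (B2 ∪ B3 ∪ B4) ∪ B1 := by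
    simp [Finset.mem_union, heA2, heA3, heA4, heB1, heB2, heB3, heB4]
  have hUA : insert e (A1 ∪ ((A2 ∪ A3 ∪ A4) ∪ (B2 ∪ B3 ∪ B4) ∪ B1)) = Finset.univ := by
    ext i
    simp only [Finset.mem_insert, Finset.mem_union, Finset.mem_univ, iff_true]
    rcases hall i with h | h | h | h | h | h | h | h | h <;> simp [h]
  obtain ⟨sA, sA', hagrA, hNA0⟩ : ∃ s t : ι → Bool,
      (∀ i ∈ (A2 ∪ A3 ∪ A4) ∪ (B2 ∪ B3 ∪ B4) ∪ B1, s i = t i) ∧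
      P (Function.update s e b) * P (Function.update t e (!b)) ≠
        P (Function.update s e (!b)) * P (Function.update t e b) := by
    by_contra hc
    push_neg at hc
    exact hA (indep_red P A1 _ e heA1 heZA hUA b hc)
  have heZB : e ∉ (A2 ∪ A3 ∪ A4) ∪ (B2 ∪ B3 ∪ B4) ∪ A1 := by
    simp [Finset.mem_union, heA1, heA2, heA3, heA4, heB2, heB3, heB4]
  have hUB : insert e (B1 ∪ ((A2 ∪ A3 ∪ A4) ∪ (B2 ∪ B3 ∪ B4) ∪ A1)) = Finset.univ := by
    ext i
    simp only [Finset.mem_insert, Finset.mem_union, Finset.mem_univ, iff_true]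
    rcases hall i with h | h | h | h | h | h | h | h | h <;> simp [h]
  obtain ⟨sB, sB', hagrB, hNB0⟩ : ∃ s t : ι → Bool,
      (∀ i ∈ (A2 ∪ A3 ∪ A4) ∪ (B2 ∪ B3 ∪ B4) ∪ A1, s i = t i) ∧
      P (Function.update s e b) * P (Function.update t e (!b)) ≠
        P (Function.update s e (!b)) * P (Function.update t e b) := by
    by_contra hc
    push_neg at hc
    exact hB (indep_red P B1 _ e heB1 heZB hUB b hc)
  -- agreement on individual blocks
  have hagrA2 : ∀ i ∈ A2, sA i = sA' i := fun i hi => hagrA i (by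
    simp [Finset.mem_union, hi])
  have hagrA3 : ∀ i ∈ A3, sA i = sA' i := fun i hi => hagrA i (by
    simp [Finset.mem_union, hi])
  have hagrA4 : ∀ i ∈ A4, sA i = sA' i := fun i hi => hagrA i (by
    simp [Finset.mem_union, hi])
  have hagrAB1 : ∀ i ∈ B1, sA i = sA' i := fun i hi => hagrA i (by
    simp [Finset.mem_union, hi])
  have hagrAB2 : ∀ i ∈ B2, sA i = sA' i := fun i hi => hagrA i (by
    simp [Finset.mem_union, hi])
  have hagrAB3 : ∀ i ∈ B3, sA i = sA' i := fun i hi => hagrA i (by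
    simp [Finset.mem_union, hi])
  have hagrAB4 : ∀ i ∈ B4, sA i = sA' i := fun i hi => hagrA i (by
    simp [Finset.mem_union, hi])
  have hagrB2 : ∀ i ∈ A2, sB i = sB' i := fun i hi => hagrB i (by
    simp [Finset.mem_union, hi])
  have hagrB3 : ∀ i ∈ A3, sB i = sB' i := fun i hi => hagrB i (by
    simp [Finset.mem_union, hi])
  have hagrB4 : ∀ i ∈ A4, sB i = sB' i := fun i hi => hagrB i (by
    simp [Finset.mem_union, hi])
  have hagrBA1 : ∀ i ∈ A1, sB i = sB' i := fun i hi => hagrB i (by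
    simp [Finset.mem_union, hi])
  have hagrBB2 : ∀ i ∈ B2, sB i = sB' i := fun i hi => hagrB i (by
    simp [Finset.mem_union, hi])
  have hagrBB3 : ∀ i ∈ B3, sB i = sB' i := fun i hi => hagrB i (by
    simp [Finset.mem_union, hi])
  have hagrBB4 : ∀ i ∈ B4, sB i = sB' i := fun i hi => hagrB i (by
    simp [Finset.mem_union, hi])
  -- the merge function
  set M : Bool → Bool → Bool → Bool → Bool → Bool → (ι → Bool) :=
    mergeFn A1 B1 A2 B3 A3 B2 A4 sA sA' sB sB' with hMdef
  have hb1 : ∀ (a b' m n p q : Bool) (i : ι), i ∈ A1 →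
      M a b' m n p q i = (if a then sA' i else sA i) := by
    intro a b' m n p q i hi
    rw [hMdef]; simp only [mergeFn]
    rw [if_pos hi]
  have hb2 : ∀ (a b' m n p q : Bool) (i : ι), i ∈ B1 →
      M a b' m n p q i = (if b' then sB' i else sB i) := by
    intro a b' m n p q i hi
    rw [hMdef]; simp only [mergeFn]
    rw [if_neg (Finset.disjoint_right.mp d1B1 hi), if_pos hi]
  have hb3 : ∀ (a b' m n p q : Bool) (i : ι), i ∈ A2 →
      M a b' m n p q i = (if m then sB i else sA i) := by
    intro a b' m n p q i hi
    rw [hMdef]; simp only [mergeFn]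
    rw [if_neg (Finset.disjoint_right.mp d12 hi), if_neg (Finset.disjoint_left.mp d2B1 hi),
      if_pos hi]
  have hb4 : ∀ (a b' m n p q : Bool) (i : ι), i ∈ B3 →
      M a b' m n p q i = (if n then sB i else sA i) := by
    intro a b' m n p q i hi
    rw [hMdef]; simp only [mergeFn]
    rw [if_neg (Finset.disjoint_right.mp d1B3 hi), if_neg (Finset.disjoint_right.mp dB13 hi),
      if_neg (Finset.disjoint_right.mp d2B3 hi), if_pos hi]
  have hb5 : ∀ (a b' m n p q : Bool) (i : ι), i ∈ A3 →
      M a b' m n p q i = (if p then sB i else sA i) := by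
    intro a b' m n p q i hi
    rw [hMdef]; simp only [mergeFn]
    rw [if_neg (Finset.disjoint_right.mp d13 hi), if_neg (Finset.disjoint_left.mp d3B1 hi),
      if_neg (Finset.disjoint_right.mp d23 hi), if_neg (Finset.disjoint_left.mp d3B3 hi),
      if_pos hi]
  have hb6 : ∀ (a b' m n p q : Bool) (i : ι), i ∈ B2 →
      M a b' m n p q i = (if q then sB i else sA i) := by
    intro a b' m n p q i hi
    rw [hMdef]; simp only [mergeFn]
    rw [if_neg (Finset.disjoint_right.mp d1B2 hi), if_neg (Finset.disjoint_right.mp dB12 hi),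
      if_neg (Finset.disjoint_right.mp d2B2 hi), if_neg (Finset.disjoint_left.mp dB23 hi),
      if_neg (Finset.disjoint_right.mp d3B2 hi), if_pos hi]
  have hb7 : ∀ (a b' m n p q : Bool) (i : ι), i ∈ A4 →
      M a b' m n p q i = sB i := by
    intro a b' m n p q i hi
    rw [hMdef]; simp only [mergeFn]
    rw [if_neg (Finset.disjoint_right.mp d14 hi), if_neg (Finset.disjoint_left.mp d4B1 hi),
      if_neg (Finset.disjoint_right.mp d24 hi), if_neg (Finset.disjoint_left.mp d4B3 hi),
      if_neg (Finset.disjoint_right.mp d34 hi), if_neg (Finset.disjoint_left.mp d4B2 hi),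
      if_pos hi]
  have hb8 : ∀ (a b' m n p q : Bool) (i : ι), i ∈ B4 →
      M a b' m n p q i = sA i := by
    intro a b' m n p q i hi
    rw [hMdef]; simp only [mergeFn]
    rw [if_neg (Finset.disjoint_right.mp d1B4 hi), if_neg (Finset.disjoint_right.mp dB14 hi),
      if_neg (Finset.disjoint_right.mp d2B4 hi), if_neg (Finset.disjoint_right.mp dB34 hi),
      if_neg (Finset.disjoint_right.mp d3B4 hi), if_neg (Finset.disjoint_right.mp dB24 hi),
      if_neg (Finset.disjoint_right.mp d4B4 hi)]
  -- generic e-margin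
  have hEm : ∀ (s t : ι → Bool) (c : Bool),
      margin P {e} (Function.update s e c) = margin P {e} (Function.update t e c) := by
    intro s t c
    refine margin_congr P _ (fun i hi => ?_)
    rw [Finset.mem_singleton.mp hi]
    simp [Function.update_self]
  -- set-identities
  have hU2 : (A1 ∪ A2 ∪ B3 ∪ B4) ∪ (B1 ∪ B2 ∪ A3 ∪ A4) ∪ {e} = Finset.univ := by
    ext i
    simp only [Finset.mem_union, Finset.mem_singleton, Finset.mem_univ, iff_true]
    rcases hall i with h | h | h | h | h | h | h | h | h <;> simp [h]
  have hU3 : (A1 ∪ A3 ∪ B2 ∪ B4) ∪ (B1 ∪ B3 ∪ A2 ∪ A4) ∪ {e} = Finset.univ := by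
    ext i
    simp only [Finset.mem_union, Finset.mem_singleton, Finset.mem_univ, iff_true]
    rcases hall i with h | h | h | h | h | h | h | h | h <;> simp [h]
  have heAB : e ∉ (A1 ∪ A2 ∪ A3 ∪ A4) ∪ (B1 ∪ B2 ∪ B3 ∪ B4) := by
    simp [Finset.mem_union, heA1, heA2, heA3, heA4, heB1, heB2, heB3, heB4]
  have hUAB : insert e ((A1 ∪ A2 ∪ A3 ∪ A4) ∪ (B1 ∪ B2 ∪ B3 ∪ B4)) = Finset.univ := by
    ext i
    simp only [Finset.mem_insert, Finset.mem_union, Finset.mem_univ, iff_true]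
    rcases hall i with h | h | h | h | h | h | h | h | h <;> simp [h]
  -- pointwise factorization identities
  have hI2' : ∀ s : ι → Bool, P (Function.update s e b) * margin P {e} (Function.update s e b)
      = margin P ((A1 ∪ A2 ∪ B3 ∪ B4) ∪ {e}) (Function.update s e b)
        * margin P ((B1 ∪ B2 ∪ A3 ∪ A4) ∪ {e}) (Function.update s e b) := by
    intro s
    have h := I2 (Function.update s e b) (Function.update_self e b s)
    rwa [hU2, margin_univ] at h
  have hI3' : ∀ s : ι → Bool,
      P (Function.update s e (!b)) * margin P {e} (Function.update s e (!b))
      = margin P ((A1 ∪ A3 ∪ B2 ∪ B4) ∪ {e}) (Function.update s e (!b))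
        * margin P ((B1 ∪ B3 ∪ A2 ∪ A4) ∪ {e}) (Function.update s e (!b)) := by
    intro s
    have h := I3 (Function.update s e (!b)) (Function.update_self e (!b) s)
    rwa [hU3, margin_univ] at h
  have hI1' : ∀ s : ι → Bool, P (Function.update s e b) + P (Function.update s e (!b))
      = margin P (A1 ∪ A2 ∪ A3 ∪ A4) s * margin P (B1 ∪ B2 ∪ B3 ∪ B4) s := by
    intro s
    have h := I1 s
    rw [Finset.union_empty, Finset.union_empty, Finset.union_empty, margin_empty, hsum,
      mul_one] at h
    rw [margin_split_b P heAB s b, hUAB, margin_univ, margin_univ] at h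
    exact h
  -- canonical block functions
  set FF : Bool → Bool → Bool → ℝ := fun a m n =>
    margin P ((A1 ∪ A2 ∪ B3 ∪ B4) ∪ {e}) (Function.update (M a false m n false false) e b)
    with hFF
  set KKn : Bool → Bool → Bool → ℝ := fun b' p q =>
    margin P ((B1 ∪ B2 ∪ A3 ∪ A4) ∪ {e}) (Function.update (M false b' false false p q) e b)
    with hKKn
  set FF' : Bool → Bool → Bool → ℝ := fun a p q =>
    margin P ((A1 ∪ A3 ∪ B2 ∪ B4) ∪ {e}) (Function.update (M a false false false p q) e (!b))
    with hFF'
  set KK'n : Bool → Bool → Bool → ℝ := fun b' m n =>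
    margin P ((B1 ∪ B3 ∪ A2 ∪ A4) ∪ {e}) (Function.update (M false b' m n false false) e (!b))
    with hKK'n
  set PH : Bool → Bool → Bool → ℝ := fun a m p =>
    margin P (A1 ∪ A2 ∪ A3 ∪ A4) (M a false m false p false) with hPH
  set PS : Bool → Bool → Bool → ℝ := fun b' q n =>
    margin P (B1 ∪ B2 ∪ B3 ∪ B4) (M false b' false n false q) with hPS
  set c0 : ℝ := margin P {e} (Function.update (M false false false false false false) e b)
    with hc0
  set c1 : ℝ := margin P {e} (Function.update (M false false false false false false) e (!b))
    with hc1
  have hcFF : ∀ a b' m n p q : Bool,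
      margin P ((A1 ∪ A2 ∪ B3 ∪ B4) ∪ {e}) (Function.update (M a b' m n p q) e b)
        = FF a m n := by
    intro a b' m n p q
    refine margin_congr P _ (fun i hi => ?_)
    rcases Finset.mem_union.mp hi with hj | hie
    · simp only [Finset.mem_union] at hj
      rcases hj with ((h | h) | h) | h
      · have hne : i ≠ e := fun hh => heA1 (by rw [← hh]; exact h)
        rw [Function.update_of_ne hne, Function.update_of_ne hne]
        rw [hb1 a b' m n p q i h, hb1 a false m n false false i h]
      · have hne : i ≠ e := fun hh => heA2 (by rw [← hh]; exact h)
        rw [Function.update_of_ne hne, Function.update_of_ne hne]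
        rw [hb3 a b' m n p q i h, hb3 a false m n false false i h]
      · have hne : i ≠ e := fun hh => heB3 (by rw [← hh]; exact h)
        rw [Function.update_of_ne hne, Function.update_of_ne hne]
        rw [hb4 a b' m n p q i h, hb4 a false m n false false i h]
      · have hne : i ≠ e := fun hh => heB4 (by rw [← hh]; exact h)
        rw [Function.update_of_ne hne, Function.update_of_ne hne]
        rw [hb8 a b' m n p q i h, hb8 a false m n false false i h]
    · rw [Finset.mem_singleton.mp hie, Function.update_self, Function.update_self]

  have hcKKn : ∀ a b' m n p q : Bool,
      margin P ((B1 ∪ B2 ∪ A3 ∪ A4) ∪ {e}) (Function.update (M a b' m n p q) e b)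
        = KKn b' p q := by
    intro a b' m n p q
    refine margin_congr P _ (fun i hi => ?_)
    rcases Finset.mem_union.mp hi with hj | hie
    · simp only [Finset.mem_union] at hj
      rcases hj with ((h | h) | h) | h
      · have hne : i ≠ e := fun hh => heB1 (by rw [← hh]; exact h)
        rw [Function.update_of_ne hne, Function.update_of_ne hne]
        rw [hb2 a b' m n p q i h, hb2 false b' false false p q i h]
      · have hne : i ≠ e := fun hh => heB2 (by rw [← hh]; exact h)
        rw [Function.update_of_ne hne, Function.update_of_ne hne]
        rw [hb6 a b' m n p q i h, hb6 false b' false false p q i h]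
      · have hne : i ≠ e := fun hh => heA3 (by rw [← hh]; exact h)
        rw [Function.update_of_ne hne, Function.update_of_ne hne]
        rw [hb5 a b' m n p q i h, hb5 false b' false false p q i h]
      · have hne : i ≠ e := fun hh => heA4 (by rw [← hh]; exact h)
        rw [Function.update_of_ne hne, Function.update_of_ne hne]
        rw [hb7 a b' m n p q i h, hb7 false b' false false p q i h]
    · rw [Finset.mem_singleton.mp hie, Function.update_self, Function.update_self]

  have hcFF' : ∀ a b' m n p q : Bool,
      margin P ((A1 ∪ A3 ∪ B2 ∪ B4) ∪ {e}) (Function.update (M a b' m n p q) e (!b))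
        = FF' a p q := by
    intro a b' m n p q
    refine margin_congr P _ (fun i hi => ?_)
    rcases Finset.mem_union.mp hi with hj | hie
    · simp only [Finset.mem_union] at hj
      rcases hj with ((h | h) | h) | h
      · have hne : i ≠ e := fun hh => heA1 (by rw [← hh]; exact h)
        rw [Function.update_of_ne hne, Function.update_of_ne hne]
        rw [hb1 a b' m n p q i h, hb1 a false false false p q i h]
      · have hne : i ≠ e := fun hh => heA3 (by rw [← hh]; exact h)
        rw [Function.update_of_ne hne, Function.update_of_ne hne]
        rw [hb5 a b' m n p q i h, hb5 a false false false p q i h]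
      · have hne : i ≠ e := fun hh => heB2 (by rw [← hh]; exact h)
        rw [Function.update_of_ne hne, Function.update_of_ne hne]
        rw [hb6 a b' m n p q i h, hb6 a false false false p q i h]
      · have hne : i ≠ e := fun hh => heB4 (by rw [← hh]; exact h)
        rw [Function.update_of_ne hne, Function.update_of_ne hne]
        rw [hb8 a b' m n p q i h, hb8 a false false false p q i h]
    · rw [Finset.mem_singleton.mp hie, Function.update_self, Function.update_self]

  have hcKK'n : ∀ a b' m n p q : Bool,
      margin P ((B1 ∪ B3 ∪ A2 ∪ A4) ∪ {e}) (Function.update (M a b' m n p q) e (!b))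
        = KK'n b' m n := by
    intro a b' m n p q
    refine margin_congr P _ (fun i hi => ?_)
    rcases Finset.mem_union.mp hi with hj | hie
    · simp only [Finset.mem_union] at hj
      rcases hj with ((h | h) | h) | h
      · have hne : i ≠ e := fun hh => heB1 (by rw [← hh]; exact h)
        rw [Function.update_of_ne hne, Function.update_of_ne hne]
        rw [hb2 a b' m n p q i h, hb2 false b' m n false false i h]
      · have hne : i ≠ e := fun hh => heB3 (by rw [← hh]; exact h)
        rw [Function.update_of_ne hne, Function.update_of_ne hne]
        rw [hb4 a b' m n p q i h, hb4 false b' m n false false i h]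
      · have hne : i ≠ e := fun hh => heA2 (by rw [← hh]; exact h)
        rw [Function.update_of_ne hne, Function.update_of_ne hne]
        rw [hb3 a b' m n p q i h, hb3 false b' m n false false i h]
      · have hne : i ≠ e := fun hh => heA4 (by rw [← hh]; exact h)
        rw [Function.update_of_ne hne, Function.update_of_ne hne]
        rw [hb7 a b' m n p q i h, hb7 false b' m n false false i h]
    · rw [Finset.mem_singleton.mp hie, Function.update_self, Function.update_self]

  have hcPH : ∀ a b' m n p q : Bool,
      margin P (A1 ∪ A2 ∪ A3 ∪ A4) (M a b' m n p q) = PH a m p := by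
    intro a b' m n p q
    refine margin_congr P _ (fun i hi => ?_)
    simp only [Finset.mem_union] at hi
    rcases hi with ((h | h) | h) | h
    · rw [hb1 a b' m n p q i h, hb1 a false m false p false i h]
    · rw [hb3 a b' m n p q i h, hb3 a false m false p false i h]
    · rw [hb5 a b' m n p q i h, hb5 a false m false p false i h]
    · rw [hb7 a b' m n p q i h, hb7 a false m false p false i h]

  have hcPS : ∀ a b' m n p q : Bool,
      margin P (B1 ∪ B2 ∪ B3 ∪ B4) (M a b' m n p q) = PS b' q n := by
    intro a b' m n p q
    refine margin_congr P _ (fun i hi => ?_)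
    simp only [Finset.mem_union] at hi
    rcases hi with ((h | h) | h) | h
    · rw [hb2 a b' m n p q i h, hb2 false b' false n false q i h]
    · rw [hb6 a b' m n p q i h, hb6 false b' false n false q i h]
    · rw [hb4 a b' m n p q i h, hb4 false b' false n false q i h]
    · rw [hb8 a b' m n p q i h, hb8 false b' false n false q i h]

  have hWA : ∀ a : Bool, margin P ((A1 ∪ A2 ∪ B3 ∪ B4) ∪ {e})
      (Function.update (if a then sA' else sA) e b) = FF a false false := by
    intro a
    refine margin_congr P _ (fun i hi => ?_)
    rcases Finset.mem_union.mp hi with hj | hie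
    · simp only [Finset.mem_union] at hj
      rcases hj with ((h | h) | h) | h
      · have hne : i ≠ e := fun hh => heA1 (by rw [← hh]; exact h)
        rw [Function.update_of_ne hne, Function.update_of_ne hne]
        rw [hb1 a false false false false false i h]
        rcases Bool.eq_false_or_eq_true a with hx | hx <;> subst hx <;> simp
      · have hne : i ≠ e := fun hh => heA2 (by rw [← hh]; exact h)
        rw [Function.update_of_ne hne, Function.update_of_ne hne]
        rw [hb3 a false false false false false i h]
        rcases Bool.eq_false_or_eq_true a with hx | hx <;> subst hx <;>
          simp [(hagrA2 i h).symm]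
      · have hne : i ≠ e := fun hh => heB3 (by rw [← hh]; exact h)
        rw [Function.update_of_ne hne, Function.update_of_ne hne]
        rw [hb4 a false false false false false i h]
        rcases Bool.eq_false_or_eq_true a with hx | hx <;> subst hx <;>
          simp [(hagrAB3 i h).symm]
      · have hne : i ≠ e := fun hh => heB4 (by rw [← hh]; exact h)
        rw [Function.update_of_ne hne, Function.update_of_ne hne]
        rw [hb8 a false false false false false i h]
        rcases Bool.eq_false_or_eq_true a with hx | hx <;> subst hx <;>
          simp [(hagrAB4 i h).symm]
    · rw [Finset.mem_singleton.mp hie, Function.update_self, Function.update_self]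

  have hVA : margin P ((B1 ∪ B2 ∪ A3 ∪ A4) ∪ {e}) (Function.update sA' e b)
      = margin P ((B1 ∪ B2 ∪ A3 ∪ A4) ∪ {e}) (Function.update sA e b) := by
    refine margin_congr P _ (fun i hi => ?_)
    rcases Finset.mem_union.mp hi with hj | hie
    · simp only [Finset.mem_union] at hj
      rcases hj with ((h | h) | h) | h
      · have hne : i ≠ e := fun hh => heB1 (by rw [← hh]; exact h)
        rw [Function.update_of_ne hne, Function.update_of_ne hne]
        exact (hagrAB1 i h).symm
      · have hne : i ≠ e := fun hh => heB2 (by rw [← hh]; exact h)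
        rw [Function.update_of_ne hne, Function.update_of_ne hne]
        exact (hagrAB2 i h).symm
      · have hne : i ≠ e := fun hh => heA3 (by rw [← hh]; exact h)
        rw [Function.update_of_ne hne, Function.update_of_ne hne]
        exact (hagrA3 i h).symm
      · have hne : i ≠ e := fun hh => heA4 (by rw [← hh]; exact h)
        rw [Function.update_of_ne hne, Function.update_of_ne hne]
        exact (hagrA4 i h).symm
    · rw [Finset.mem_singleton.mp hie, Function.update_self, Function.update_self]

  have hWA' : ∀ a : Bool, margin P ((A1 ∪ A3 ∪ B2 ∪ B4) ∪ {e})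
      (Function.update (if a then sA' else sA) e (!b)) = FF' a false false := by
    intro a
    refine margin_congr P _ (fun i hi => ?_)
    rcases Finset.mem_union.mp hi with hj | hie
    · simp only [Finset.mem_union] at hj
      rcases hj with ((h | h) | h) | h
      · have hne : i ≠ e := fun hh => heA1 (by rw [← hh]; exact h)
        rw [Function.update_of_ne hne, Function.update_of_ne hne]
        rw [hb1 a false false false false false i h]
        rcases Bool.eq_false_or_eq_true a with hx | hx <;> subst hx <;> simp
      · have hne : i ≠ e := fun hh => heA3 (by rw [← hh]; exact h)
        rw [Function.update_of_ne hne, Function.update_of_ne hne]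
        rw [hb5 a false false false false false i h]
        rcases Bool.eq_false_or_eq_true a with hx | hx <;> subst hx <;>
          simp [(hagrA3 i h).symm]
      · have hne : i ≠ e := fun hh => heB2 (by rw [← hh]; exact h)
        rw [Function.update_of_ne hne, Function.update_of_ne hne]
        rw [hb6 a false false false false false i h]
        rcases Bool.eq_false_or_eq_true a with hx | hx <;> subst hx <;>
          simp [(hagrAB2 i h).symm]
      · have hne : i ≠ e := fun hh => heB4 (by rw [← hh]; exact h)
        rw [Function.update_of_ne hne, Function.update_of_ne hne]
        rw [hb8 a false false false false false i h]
        rcases Bool.eq_false_or_eq_true a with hx | hx <;> subst hx <;>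
          simp [(hagrAB4 i h).symm]
    · rw [Finset.mem_singleton.mp hie, Function.update_self, Function.update_self]

  have hVA' : margin P ((B1 ∪ B3 ∪ A2 ∪ A4) ∪ {e}) (Function.update sA' e (!b))
      = margin P ((B1 ∪ B3 ∪ A2 ∪ A4) ∪ {e}) (Function.update sA e (!b)) := by
    refine margin_congr P _ (fun i hi => ?_)
    rcases Finset.mem_union.mp hi with hj | hie
    · simp only [Finset.mem_union] at hj
      rcases hj with ((h | h) | h) | h
      · have hne : i ≠ e := fun hh => heB1 (by rw [← hh]; exact h)
        rw [Function.update_of_ne hne, Function.update_of_ne hne]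
        exact (hagrAB1 i h).symm
      · have hne : i ≠ e := fun hh => heB3 (by rw [← hh]; exact h)
        rw [Function.update_of_ne hne, Function.update_of_ne hne]
        exact (hagrAB3 i h).symm
      · have hne : i ≠ e := fun hh => heA2 (by rw [← hh]; exact h)
        rw [Function.update_of_ne hne, Function.update_of_ne hne]
        exact (hagrA2 i h).symm
      · have hne : i ≠ e := fun hh => heA4 (by rw [← hh]; exact h)
        rw [Function.update_of_ne hne, Function.update_of_ne hne]
        exact (hagrA4 i h).symm
    · rw [Finset.mem_singleton.mp hie, Function.update_self, Function.update_self]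

  have hWB : ∀ b' : Bool, margin P ((B1 ∪ B2 ∪ A3 ∪ A4) ∪ {e})
      (Function.update (if b' then sB' else sB) e b) = KKn b' true true := by
    intro b'
    refine margin_congr P _ (fun i hi => ?_)
    rcases Finset.mem_union.mp hi with hj | hie
    · simp only [Finset.mem_union] at hj
      rcases hj with ((h | h) | h) | h
      · have hne : i ≠ e := fun hh => heB1 (by rw [← hh]; exact h)
        rw [Function.update_of_ne hne, Function.update_of_ne hne]
        rw [hb2 false b' false false true true i h]
        rcases Bool.eq_false_or_eq_true b' with hx | hx <;> subst hx <;> simp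
      · have hne : i ≠ e := fun hh => heB2 (by rw [← hh]; exact h)
        rw [Function.update_of_ne hne, Function.update_of_ne hne]
        rw [hb6 false b' false false true true i h]
        rcases Bool.eq_false_or_eq_true b' with hx | hx <;> subst hx <;>
          simp [(hagrBB2 i h).symm]
      · have hne : i ≠ e := fun hh => heA3 (by rw [← hh]; exact h)
        rw [Function.update_of_ne hne, Function.update_of_ne hne]
        rw [hb5 false b' false false true true i h]
        rcases Bool.eq_false_or_eq_true b' with hx | hx <;> subst hx <;>
          simp [(hagrB3 i h).symm]
      · have hne : i ≠ e := fun hh => heA4 (by rw [← hh]; exact h)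
        rw [Function.update_of_ne hne, Function.update_of_ne hne]
        rw [hb7 false b' false false true true i h]
        rcases Bool.eq_false_or_eq_true b' with hx | hx <;> subst hx <;>
          simp [(hagrB4 i h).symm]
    · rw [Finset.mem_singleton.mp hie, Function.update_self, Function.update_self]

  have hVB : margin P ((A1 ∪ A2 ∪ B3 ∪ B4) ∪ {e}) (Function.update sB' e b)
      = margin P ((A1 ∪ A2 ∪ B3 ∪ B4) ∪ {e}) (Function.update sB e b) := by
    refine margin_congr P _ (fun i hi => ?_)
    rcases Finset.mem_union.mp hi with hj | hie
    · simp only [Finset.mem_union] at hj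
      rcases hj with ((h | h) | h) | h
      · have hne : i ≠ e := fun hh => heA1 (by rw [← hh]; exact h)
        rw [Function.update_of_ne hne, Function.update_of_ne hne]
        exact (hagrBA1 i h).symm
      · have hne : i ≠ e := fun hh => heA2 (by rw [← hh]; exact h)
        rw [Function.update_of_ne hne, Function.update_of_ne hne]
        exact (hagrB2 i h).symm
      · have hne : i ≠ e := fun hh => heB3 (by rw [← hh]; exact h)
        rw [Function.update_of_ne hne, Function.update_of_ne hne]
        exact (hagrBB3 i h).symm
      · have hne : i ≠ e := fun hh => heB4 (by rw [← hh]; exact h)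
        rw [Function.update_of_ne hne, Function.update_of_ne hne]
        exact (hagrBB4 i h).symm
    · rw [Finset.mem_singleton.mp hie, Function.update_self, Function.update_self]

  have hWB' : ∀ b' : Bool, margin P ((B1 ∪ B3 ∪ A2 ∪ A4) ∪ {e})
      (Function.update (if b' then sB' else sB) e (!b)) = KK'n b' true true := by
    intro b'
    refine margin_congr P _ (fun i hi => ?_)
    rcases Finset.mem_union.mp hi with hj | hie
    · simp only [Finset.mem_union] at hj
      rcases hj with ((h | h) | h) | h
      · have hne : i ≠ e := fun hh => heB1 (by rw [← hh]; exact h)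
        rw [Function.update_of_ne hne, Function.update_of_ne hne]
        rw [hb2 false b' true true false false i h]
        rcases Bool.eq_false_or_eq_true b' with hx | hx <;> subst hx <;> simp
      · have hne : i ≠ e := fun hh => heB3 (by rw [← hh]; exact h)
        rw [Function.update_of_ne hne, Function.update_of_ne hne]
        rw [hb4 false b' true true false false i h]
        rcases Bool.eq_false_or_eq_true b' with hx | hx <;> subst hx <;>
          simp [(hagrBB3 i h).symm]
      · have hne : i ≠ e := fun hh => heA2 (by rw [← hh]; exact h)
        rw [Function.update_of_ne hne, Function.update_of_ne hne]
        rw [hb3 false b' true true false false i h]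
        rcases Bool.eq_false_or_eq_true b' with hx | hx <;> subst hx <;>
          simp [(hagrB2 i h).symm]
      · have hne : i ≠ e := fun hh => heA4 (by rw [← hh]; exact h)
        rw [Function.update_of_ne hne, Function.update_of_ne hne]
        rw [hb7 false b' true true false false i h]
        rcases Bool.eq_false_or_eq_true b' with hx | hx <;> subst hx <;>
          simp [(hagrB4 i h).symm]
    · rw [Finset.mem_singleton.mp hie, Function.update_self, Function.update_self]

  have hVB' : margin P ((A1 ∪ A3 ∪ B2 ∪ B4) ∪ {e}) (Function.update sB' e (!b))
      = margin P ((A1 ∪ A3 ∪ B2 ∪ B4) ∪ {e}) (Function.update sB e (!b)) := by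
    refine margin_congr P _ (fun i hi => ?_)
    rcases Finset.mem_union.mp hi with hj | hie
    · simp only [Finset.mem_union] at hj
      rcases hj with ((h | h) | h) | h
      · have hne : i ≠ e := fun hh => heA1 (by rw [← hh]; exact h)
        rw [Function.update_of_ne hne, Function.update_of_ne hne]
        exact (hagrBA1 i h).symm
      · have hne : i ≠ e := fun hh => heA3 (by rw [← hh]; exact h)
        rw [Function.update_of_ne hne, Function.update_of_ne hne]
        exact (hagrB3 i h).symm
      · have hne : i ≠ e := fun hh => heB2 (by rw [← hh]; exact h)
        rw [Function.update_of_ne hne, Function.update_of_ne hne]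
        exact (hagrBB2 i h).symm
      · have hne : i ≠ e := fun hh => heB4 (by rw [← hh]; exact h)
        rw [Function.update_of_ne hne, Function.update_of_ne hne]
        exact (hagrBB4 i h).symm
    · rw [Finset.mem_singleton.mp hie, Function.update_self, Function.update_self]
  -- positivity
  have hc0pos : 0 < c0 := margin_pos P hpos _ _
  have hc1pos : 0 < c1 := margin_pos P hpos _ _
  have hFFpos : ∀ a m n, 0 < FF a m n := fun a m n => margin_pos P hpos _ _
  have hFF'pos : ∀ a p q, 0 < FF' a p q := fun a p q => margin_pos P hpos _ _
  have hKKnpos : ∀ b' p q, 0 < KKn b' p q := fun b' p q => margin_pos P hpos _ _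
  have hKK'npos : ∀ b' m n, 0 < KK'n b' m n := fun b' m n => margin_pos P hpos _ _
  have hPHpos : ∀ a m p, 0 < PH a m p := fun a m p => margin_pos P hpos _ _
  have hPSpos : ∀ b' q n, 0 < PS b' q n := fun b' q n => margin_pos P hpos _ _
  -- main equation on the grid
  have hE6 : ∀ a b' m n p q : Bool,
      FF a m n * (KKn b' p q / c0) + FF' a p q * (KK'n b' m n / c1)
        = PH a m p * PS b' q n := by
    intro a b' m n p q
    have eA := hI2' (M a b' m n p q)
    rw [hcFF a b' m n p q, hcKKn a b' m n p q,
      hEm (M a b' m n p q) (M false false false false false false) b, ← hc0] at eA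
    have eB := hI3' (M a b' m n p q)
    rw [hcFF' a b' m n p q, hcKK'n a b' m n p q,
      hEm (M a b' m n p q) (M false false false false false false) (!b), ← hc1] at eB
    have eC := hI1' (M a b' m n p q)
    rw [hcPH a b' m n p q, hcPS a b' m n p q] at eC
    have h0 : c0 ≠ 0 := hc0pos.ne'
    have h1 : c1 ≠ 0 := hc1pos.ne'
    field_simp
    linear_combination (-c1) * eA - c0 * eB + (c0 * c1) * eC
  -- nondegeneracy, A-side
  have hxA0 : margin P ((A1 ∪ A2 ∪ B3 ∪ B4) ∪ {e}) (Function.update sA e b)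
      = FF false false false := by simpa using hWA false
  have hxA1 : margin P ((A1 ∪ A2 ∪ B3 ∪ B4) ∪ {e}) (Function.update sA' e b)
      = FF true false false := by simpa using hWA true
  have hxA0' : margin P ((A1 ∪ A3 ∪ B2 ∪ B4) ∪ {e}) (Function.update sA e (!b))
      = FF' false false false := by simpa using hWA' false
  have hxA1' : margin P ((A1 ∪ A3 ∪ B2 ∪ B4) ∪ {e}) (Function.update sA' e (!b))
      = FF' true false false := by simpa using hWA' true
  have eA1 := hI2' sA
  rw [hxA0, (hEm sA (M false false false false false false) b).trans hc0.symm] at eA1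
  have eA2 := hI2' sA'
  rw [hxA1, (hEm sA' (M false false false false false false) b).trans hc0.symm, hVA] at eA2
  have eA3 := hI3' sA
  rw [hxA0', (hEm sA (M false false false false false false) (!b)).trans hc1.symm] at eA3
  have eA4 := hI3' sA'
  rw [hxA1', (hEm sA' (M false false false false false false) (!b)).trans hc1.symm, hVA'] at eA4
  have hNA6 : FF true false false * FF' false false false
      ≠ FF false false false * FF' true false false := by
    intro heq
    refine hNA0 (mul_right_cancel₀ (mul_pos hc0pos hc1pos).ne' ?_)
    linear_combination (P (Function.update sA' e (!b)) * c1) * eA1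
      + (FF false false false * margin P ((B1 ∪ B2 ∪ A3 ∪ A4) ∪ {e}) (Function.update sA e b)) * eA4
      - (P (Function.update sA' e b) * c0) * eA3
      - (FF' false false false * margin P ((B1 ∪ B3 ∪ A2 ∪ A4) ∪ {e}) (Function.update sA e (!b))) * eA2
      - (margin P ((B1 ∪ B2 ∪ A3 ∪ A4) ∪ {e}) (Function.update sA e b)
          * margin P ((B1 ∪ B3 ∪ A2 ∪ A4) ∪ {e}) (Function.update sA e (!b))) * heq
  -- nondegeneracy, B-side
  have hyB0 : margin P ((B1 ∪ B2 ∪ A3 ∪ A4) ∪ {e}) (Function.update sB e b)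
      = KKn false true true := by simpa using hWB false
  have hyB1 : margin P ((B1 ∪ B2 ∪ A3 ∪ A4) ∪ {e}) (Function.update sB' e b)
      = KKn true true true := by simpa using hWB true
  have hyB0' : margin P ((B1 ∪ B3 ∪ A2 ∪ A4) ∪ {e}) (Function.update sB e (!b))
      = KK'n false true true := by simpa using hWB' false
  have hyB1' : margin P ((B1 ∪ B3 ∪ A2 ∪ A4) ∪ {e}) (Function.update sB' e (!b))
      = KK'n true true true := by simpa using hWB' true
  have eB1 := hI2' sB
  rw [hyB0, (hEm sB (M false false false false false false) b).trans hc0.symm] at eB1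
  have eB2 := hI2' sB'
  rw [hyB1, (hEm sB' (M false false false false false false) b).trans hc0.symm, hVB] at eB2
  have eB3 := hI3' sB
  rw [hyB0', (hEm sB (M false false false false false false) (!b)).trans hc1.symm] at eB3
  have eB4 := hI3' sB'
  rw [hyB1', (hEm sB' (M false false false false false false) (!b)).trans hc1.symm, hVB'] at eB4
  have hNB6 : KK'n true true true * KKn false true true
      ≠ KK'n false true true * KKn true true true := by
    intro heq
    refine hNB0 (mul_right_cancel₀ (mul_pos hc0pos hc1pos).ne' ?_)
    linear_combination (P (Function.update sB' e (!b)) * c1) * eB1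
      + (KKn false true true * margin P ((A1 ∪ A2 ∪ B3 ∪ B4) ∪ {e}) (Function.update sB e b)) * eB4
      - (P (Function.update sB' e b) * c0) * eB3
      - (KK'n false true true * margin P ((A1 ∪ A3 ∪ B2 ∪ B4) ∪ {e}) (Function.update sB e (!b))) * eB2
      + (margin P ((A1 ∪ A2 ∪ B3 ∪ B4) ∪ {e}) (Function.update sB e b)
          * margin P ((A1 ∪ A3 ∪ B2 ∪ B4) ∪ {e}) (Function.update sB e (!b))) * heq
  exact indep_core FF FF' (fun b' p q => KKn b' p q / c0) (fun b' m n => KK'n b' m n / c1)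
    PH PS hFFpos hFF'pos (fun b' p q => div_pos (hKKnpos b' p q) hc0pos)
    (fun b' m n => div_pos (hKK'npos b' m n) hc1pos) hPHpos hPSpos hE6 hNA6
    (by
      intro h
      apply hNB6
      have h0 : c0 ≠ 0 := hc0pos.ne'
      have h1 : c1 ≠ 0 := hc1pos.ne'
      field_simp at h
      linear_combination h)
end
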